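/- arXiv:2510.07696 — 6 statements merged into one kernel-verified Lean document; each statement's English description precedes it below -/
import Mathlib

section
/- For every nonempty word x over a finite alphabet Σ with |Σ| ≥ 2, there exists a nondeterministic finite automaton (without ε-transitions) with at most |x|/2 + 1 states that accepts x and rejects every other word of the same length as x. -/
/-- An NFA exactly accepts `x` if it accepts `x` and rejects every other word
of the same length. -/
def ExactAccepts {α σ : Type} (M : NFA α σ) (x : List α) : Prop :=
  x ∈ M.accepts ∧ ∀ y : List α, y.length = x.length → y ∈ M.accepts → y = x

section Helpers

variable {α σ : Type}

lemma mem_evalFrom_iff (M : NFA α σ) (y : List α) :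
    ∀ (S : Set σ) (q : σ), q ∈ M.evalFrom S y ↔ ∃ s ∈ S, q ∈ M.evalFrom {s} y := by
  induction y with
  | nil => intro S q; simp [NFA.evalFrom_nil]
  | cons a t ih =>
    intro S q
    show q ∈ M.evalFrom (M.stepSet S a) t ↔ ∃ s ∈ S, q ∈ M.evalFrom (M.stepSet {s} a) t
    rw [ih]
    constructor
    · rintro ⟨r, hr, hq⟩
      rw [NFA.mem_stepSet] at hr
      obtain ⟨s, hs, hrs⟩ := hr
      refine ⟨s, hs, ?_⟩
      rw [ih]
      exact ⟨r, by rw [NFA.mem_stepSet]; exact ⟨s, rfl, hrs⟩, hq⟩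
    · rintro ⟨s, hs, hq⟩
      rw [ih] at hq
      obtain ⟨r, hr, hq⟩ := hq
      rw [NFA.mem_stepSet] at hr
      obtain ⟨s', hs', hrs'⟩ := hr
      rw [Set.mem_singleton_iff] at hs'
      exact ⟨r, by rw [NFA.mem_stepSet]; exact ⟨s, hs, hs' ▸ hrs'⟩, hq⟩

lemma mem_evalFrom_cons (M : NFA α σ) (s q : σ) (a : α) (t : List α) :
    q ∈ M.evalFrom {s} (a :: t) ↔ ∃ r ∈ M.step s a, q ∈ M.evalFrom {r} t := by
  show q ∈ M.evalFrom (M.stepSet {s} a) t ↔ _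
  rw [mem_evalFrom_iff]
  constructor
  · rintro ⟨r, hr, hq⟩
    rw [NFA.mem_stepSet] at hr
    obtain ⟨s', hs', hrs'⟩ := hr
    rw [Set.mem_singleton_iff] at hs'
    subst hs'
    exact ⟨r, hrs', hq⟩
  · rintro ⟨r, hr, hq⟩
    exact ⟨r, by rw [NFA.mem_stepSet]; exact ⟨s, rfl, hr⟩, hq⟩

lemma head_eq_of_getElem? {x : List α} {i : ℕ} {a : α} (h : i < x.length)
    (h2 : x[i]? = some a) : a = x[i] := by
  rw [List.getElem?_eq_getElem h] at h2
  exact (Option.some_inj.mp h2).symm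

end Helpers

section Odd

variable {α : Type}

/-- Hyde's NFA for a word of odd length `2*m+1`. -/
def oddNFA (x : List α) (m : ℕ) : NFA α (Fin (m + 1)) where
  step s a := { t | (t.val = s.val + 1 ∧ x[s.val]? = some a) ∨
                    (s.val = t.val + 1 ∧ x[x.length - s.val]? = some a) ∨
                    (s.val = m ∧ t.val = m ∧ x[m]? = some a) }
  start := {⟨0, Nat.succ_pos m⟩}
  accept := {⟨0, Nat.succ_pos m⟩}

lemma odd_down (x : List α) (m : ℕ) (hn : x.length = 2 * m + 1) :
    ∀ i, (hi : i ≤ m) →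
      (⟨0, Nat.succ_pos m⟩ : Fin (m + 1)) ∈
        (oddNFA x m).evalFrom {⟨i, by omega⟩} (x.drop (x.length - i)) := by
  intro i
  induction i with
  | zero =>
    intro _
    simp only [Nat.sub_zero]
    rw [show x.drop x.length = [] by simp]
    simp [NFA.evalFrom_nil]
  | succ i ih =>
    intro hi
    have h1 : x.length - (i + 1) < x.length := by omega
    rw [List.drop_eq_getElem_cons h1]
    rw [mem_evalFrom_cons]
    refine ⟨⟨i, by omega⟩, ?_, ?_⟩
    · right; left
      exact ⟨rfl, List.getElem?_eq_getElem h1⟩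
    · have := ih (by omega)
      rwa [show x.length - (i + 1) + 1 = x.length - i by omega]

lemma odd_up (x : List α) (m : ℕ) (hn : x.length = 2 * m + 1) :
    ∀ (j i : ℕ), (hij : i + j = m) →
      (⟨0, Nat.succ_pos m⟩ : Fin (m + 1)) ∈
        (oddNFA x m).evalFrom {⟨i, by omega⟩} (x.drop i) := by
  intro j
  induction j with
  | zero =>
    intro i hij
    have hi : m = i := by omega
    subst hi
    have h1 : m < x.length := by omega
    rw [List.drop_eq_getElem_cons h1]
    rw [mem_evalFrom_cons]
    refine ⟨⟨m, by omega⟩, ?_, ?_⟩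
    · right; right
      exact ⟨rfl, rfl, List.getElem?_eq_getElem h1⟩
    · have := odd_down x m hn m le_rfl
      rwa [show x.length - m = m + 1 by omega] at this
  | succ j ih =>
    intro i hij
    have h1 : i < x.length := by omega
    rw [List.drop_eq_getElem_cons h1]
    rw [mem_evalFrom_cons]
    refine ⟨⟨i + 1, by omega⟩, ?_, ?_⟩
    · left
      exact ⟨rfl, List.getElem?_eq_getElem h1⟩
    · exact ih (i + 1) (by omega)

lemma odd_main (x : List α) (m : ℕ) (hn : x.length = 2 * m + 1) :
    ∀ (y : List α) (r : Fin (m + 1)),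
      (⟨0, Nat.succ_pos m⟩ : Fin (m + 1)) ∈ (oddNFA x m).evalFrom {r} y →
      r.val ≤ y.length ∧
      (y.length = r.val → y = x.drop (x.length - r.val)) ∧
      (y.length = x.length - r.val → y = x.drop r.val) ∧
      (y.length < x.length - r.val → (y.length + r.val) % 2 = 0) := by
  intro y
  induction y with
  | nil =>
    intro r h
    rw [NFA.evalFrom_nil, Set.mem_singleton_iff] at h
    have hr : r.val = 0 := h ▸ rfl
    refine ⟨by simp only [List.length_nil]; omega, ?_, ?_, ?_⟩
    · intro _; rw [hr]; simp
    · intro hl; simp only [List.length_nil] at hl; omega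
    · intro _; simp only [List.length_nil]; omega
  | cons a t ih =>
    intro s h
    rw [mem_evalFrom_cons] at h
    obtain ⟨r, hr, hq⟩ := h
    obtain ⟨IH1, IH2, IH3, IH4⟩ := ih r hq
    have hrlt : r.val < m + 1 := r.isLt
    have hslt : s.val < m + 1 := s.isLt
    rcases hr with ⟨h1, h2⟩ | ⟨h1, h2⟩ | ⟨h1, h2, h3⟩
    · -- up step: r.val = s.val + 1
      refine ⟨by simp only [List.length_cons]; omega, ?_, ?_, ?_⟩
      · intro hl; simp only [List.length_cons] at hl; omega
      · intro hl
        simp only [List.length_cons] at hl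
        have ht : t = x.drop (s.val + 1) := by
          rw [← h1]; exact IH3 (by omega)
        have hsx : s.val < x.length := by omega
        have ha : a = x[s.val] := head_eq_of_getElem? hsx h2
        rw [List.drop_eq_getElem_cons hsx, ← ha, ← ht]
      · intro hl
        simp only [List.length_cons] at hl ⊢
        have := IH4 (by omega)
        omega
    · -- down step: s.val = r.val + 1
      refine ⟨by simp only [List.length_cons]; omega, ?_, ?_, ?_⟩
      · intro hl
        simp only [List.length_cons] at hl
        have ht : t = x.drop (x.length - r.val) := IH2 (by omega)
        have hix : x.length - s.val < x.length := by omega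
        have ha : a = x[x.length - s.val] := head_eq_of_getElem? hix h2
        rw [List.drop_eq_getElem_cons hix,
          show x.length - s.val + 1 = x.length - r.val by omega, ← ha, ← ht]
      · intro hl
        simp only [List.length_cons] at hl
        exfalso
        have := IH4 (by omega)
        omega
      · intro hl
        simp only [List.length_cons] at hl ⊢
        have := IH4 (by omega)
        omega
    · -- loop step: s.val = m, r.val = m
      refine ⟨by simp only [List.length_cons]; omega, ?_, ?_, ?_⟩
      · intro hl; simp only [List.length_cons] at hl; omega
      · intro hl
        simp only [List.length_cons] at hl
        have ht : t = x.drop (x.length - m) := by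
          rw [← h2]; exact IH2 (by omega)
        have hmx : m < x.length := by omega
        have ha : a = x[m] := head_eq_of_getElem? hmx h3
        rw [h1, List.drop_eq_getElem_cons hmx,
          show m + 1 = x.length - m by omega, ← ha, ← ht]
      · intro hl
        simp only [List.length_cons] at hl
        omega

lemma odd_exact (x : List α) (m : ℕ) (hn : x.length = 2 * m + 1) :
    ExactAccepts (oddNFA x m) x := by
  constructor
  · rw [NFA.mem_accepts]
    refine ⟨⟨0, Nat.succ_pos m⟩, rfl, ?_⟩
    have := odd_up x m hn m 0 (by omega)
    rw [List.drop_zero] at this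
    exact this
  · intro y hy hacc
    rw [NFA.mem_accepts] at hacc
    obtain ⟨S, hS, hmem⟩ := hacc
    have hS' : S = ⟨0, Nat.succ_pos m⟩ := hS
    subst hS'
    have h3 := (odd_main x m hn y ⟨0, Nat.succ_pos m⟩ hmem).2.2.1 (by simpa using hy)
    simpa using h3

end Odd

section Even

variable {α : Type}

/-- Hyde's NFA for a word of even length `2*m`: the odd construction on the
first `2*m-1` letters together with a sink state `m` reached from `0` on the
last letter. -/
def evenNFA (x : List α) (m : ℕ) : NFA α (Fin (m + 1)) where
  step s a := { t | (t.val = s.val + 1 ∧ t.val ≤ m - 1 ∧ x[s.val]? = some a) ∨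
                    (s.val = t.val + 1 ∧ s.val ≤ m - 1 ∧ x[x.length - 1 - s.val]? = some a) ∨
                    (s.val = m - 1 ∧ t.val = m - 1 ∧ x[m - 1]? = some a) ∨
                    (s.val = 0 ∧ t.val = m ∧ x[x.length - 1]? = some a) }
  start := {⟨0, Nat.succ_pos m⟩}
  accept := {⟨m, Nat.lt_succ_self m⟩}

lemma even_down (x : List α) (m : ℕ) (hm : 1 ≤ m) (hn : x.length = 2 * m) :
    ∀ i, (hi : i ≤ m - 1) →
      (⟨m, Nat.lt_succ_self m⟩ : Fin (m + 1)) ∈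
        (evenNFA x m).evalFrom {⟨i, by omega⟩} (x.drop (x.length - 1 - i)) := by
  intro i
  induction i with
  | zero =>
    intro _
    simp only [Nat.sub_zero]
    have h1 : x.length - 1 < x.length := by omega
    rw [List.drop_eq_getElem_cons h1,
      show x.length - 1 + 1 = x.length by omega, show x.drop x.length = [] by simp]
    rw [mem_evalFrom_cons]
    refine ⟨⟨m, Nat.lt_succ_self m⟩, ?_, by simp [NFA.evalFrom_nil]⟩
    right; right; right
    exact ⟨rfl, rfl, List.getElem?_eq_getElem h1⟩
  | succ i ih =>
    intro hi
    have h1 : x.length - 1 - (i + 1) < x.length := by omega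
    rw [List.drop_eq_getElem_cons h1]
    rw [mem_evalFrom_cons]
    refine ⟨⟨i, by omega⟩, ?_, ?_⟩
    · right; left
      refine ⟨rfl, by show i + 1 ≤ m - 1; omega, List.getElem?_eq_getElem h1⟩
    · have := ih (by omega)
      rwa [show x.length - 1 - (i + 1) + 1 = x.length - 1 - i by omega]

lemma even_up (x : List α) (m : ℕ) (hm : 1 ≤ m) (hn : x.length = 2 * m) :
    ∀ (j i : ℕ), (hij : i + j = m - 1) →
      (⟨m, Nat.lt_succ_self m⟩ : Fin (m + 1)) ∈
        (evenNFA x m).evalFrom {⟨i, by omega⟩} (x.drop i) := by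
  intro j
  induction j with
  | zero =>
    intro i hij
    have hi : m - 1 = i := by omega
    subst hi
    have h1 : m - 1 < x.length := by omega
    rw [List.drop_eq_getElem_cons h1]
    rw [mem_evalFrom_cons]
    refine ⟨⟨m - 1, by omega⟩, ?_, ?_⟩
    · right; right; left
      exact ⟨rfl, rfl, List.getElem?_eq_getElem h1⟩
    · have := even_down x m hm hn (m - 1) le_rfl
      rwa [show x.length - 1 - (m - 1) = m - 1 + 1 by omega] at this
  | succ j ih =>
    intro i hij
    have h1 : i < x.length := by omega
    rw [List.drop_eq_getElem_cons h1]
    rw [mem_evalFrom_cons]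
    refine ⟨⟨i + 1, by omega⟩, ?_, ?_⟩
    · left
      refine ⟨rfl, by show i + 1 ≤ m - 1; omega, List.getElem?_eq_getElem h1⟩
    · exact ih (i + 1) (by omega)

lemma even_sink_empty (x : List α) (m : ℕ) (hm : 1 ≤ m) (a : α) (r : Fin (m + 1))
    (hr : r.val = m) : (evenNFA x m).step r a = ∅ := by
  ext t
  simp only [evenNFA, Set.mem_setOf_eq, Set.mem_empty_iff_false, iff_false]
  have htlt : t.val < m + 1 := t.isLt
  rintro (⟨h1, h2, h3⟩ | ⟨h1, h2, h3⟩ | ⟨h1, h2, h3⟩ | ⟨h1, h2, h3⟩) <;> omega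

lemma even_main (x : List α) (m : ℕ) (hm : 1 ≤ m) (hn : x.length = 2 * m) :
    ∀ (y : List α) (r : Fin (m + 1)), r.val < m →
      (⟨m, Nat.lt_succ_self m⟩ : Fin (m + 1)) ∈ (evenNFA x m).evalFrom {r} y →
      r.val + 1 ≤ y.length ∧
      (y.length = r.val + 1 → y = x.drop (x.length - 1 - r.val)) ∧
      (y.length = x.length - r.val → y = x.drop r.val) ∧
      (y.length < x.length - r.val → (y.length + r.val + 1) % 2 = 0) := by
  intro y
  induction y with
  | nil =>
    intro r hrm h
    rw [NFA.evalFrom_nil, Set.mem_singleton_iff] at h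
    have : (m : ℕ) = r.val := by rw [← h]
    omega
  | cons a t ih =>
    intro s hsm h
    rw [mem_evalFrom_cons] at h
    obtain ⟨r, hr, hq⟩ := h
    have hrlt : r.val < m + 1 := r.isLt
    rcases hr with ⟨h1, h2, h3⟩ | ⟨h1, h2, h3⟩ | ⟨h1, h2, h3⟩ | ⟨h1, h2, h3⟩
    · -- up step: r.val = s.val + 1 ≤ m - 1
      obtain ⟨IH1, IH2, IH3, IH4⟩ := ih r (by omega) hq
      refine ⟨by simp only [List.length_cons]; omega, ?_, ?_, ?_⟩
      · intro hl; simp only [List.length_cons] at hl; omega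
      · intro hl
        simp only [List.length_cons] at hl
        have ht : t = x.drop (s.val + 1) := by
          rw [← h1]; exact IH3 (by omega)
        have hsx : s.val < x.length := by omega
        have ha : a = x[s.val] := head_eq_of_getElem? hsx h3
        rw [List.drop_eq_getElem_cons hsx, ← ha, ← ht]
      · intro hl
        simp only [List.length_cons] at hl ⊢
        have := IH4 (by omega)
        omega
    · -- down step: s.val = r.val + 1
      obtain ⟨IH1, IH2, IH3, IH4⟩ := ih r (by omega) hq
      refine ⟨by simp only [List.length_cons]; omega, ?_, ?_, ?_⟩
      · intro hl
        simp only [List.length_cons] at hl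
        have ht : t = x.drop (x.length - 1 - r.val) := IH2 (by omega)
        have hix : x.length - 1 - s.val < x.length := by omega
        have ha : a = x[x.length - 1 - s.val] := head_eq_of_getElem? hix h3
        rw [List.drop_eq_getElem_cons hix,
          show x.length - 1 - s.val + 1 = x.length - 1 - r.val by omega, ← ha, ← ht]
      · intro hl
        simp only [List.length_cons] at hl
        exfalso
        have := IH4 (by omega)
        omega
      · intro hl
        simp only [List.length_cons] at hl ⊢
        have := IH4 (by omega)
        omega
    · -- loop step: s.val = m - 1, r.val = m - 1
      obtain ⟨IH1, IH2, IH3, IH4⟩ := ih r (by omega) hq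
      refine ⟨by simp only [List.length_cons]; omega, ?_, ?_, ?_⟩
      · intro hl; simp only [List.length_cons] at hl; omega
      · intro hl
        simp only [List.length_cons] at hl
        have ht : t = x.drop (x.length - 1 - (m - 1)) := by
          rw [← h2]; exact IH2 (by omega)
        have hmx : m - 1 < x.length := by omega
        have ha : a = x[m - 1] := head_eq_of_getElem? hmx h3
        rw [h1, List.drop_eq_getElem_cons hmx,
          show m - 1 + 1 = x.length - 1 - (m - 1) by omega, ← ha, ← ht]
      · intro hl
        simp only [List.length_cons] at hl
        omega
    · -- sink step: s.val = 0, r.val = m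
      have htnil : t = [] := by
        cases t with
        | nil => rfl
        | cons b u =>
          exfalso
          rw [mem_evalFrom_cons] at hq
          obtain ⟨r', hr', _⟩ := hq
          rw [even_sink_empty x m hm b r h2] at hr'
          exact hr'
      subst htnil
      have hix : x.length - 1 < x.length := by omega
      have ha : a = x[x.length - 1] := head_eq_of_getElem? hix h3
      refine ⟨by simp only [List.length_cons]; omega, ?_, ?_, ?_⟩
      · intro _
        rw [show x.length - 1 - s.val = x.length - 1 by omega,
          List.drop_eq_getElem_cons hix,
          show x.length - 1 + 1 = x.length by omega, show x.drop x.length = [] by simp, ← ha]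
      · intro hl; simp only [List.length_cons, List.length_nil] at hl; omega
      · intro _
        simp only [List.length_cons, List.length_nil]
        omega

lemma even_exact (x : List α) (m : ℕ) (hm : 1 ≤ m) (hn : x.length = 2 * m) :
    ExactAccepts (evenNFA x m) x := by
  constructor
  · rw [NFA.mem_accepts]
    refine ⟨⟨m, Nat.lt_succ_self m⟩, rfl, ?_⟩
    have := even_up x m hm hn (m - 1) 0 (by omega)
    rw [List.drop_zero] at this
    exact this
  · intro y hy hacc
    rw [NFA.mem_accepts] at hacc
    obtain ⟨S, hS, hmem⟩ := hacc
    have hS' : S = ⟨m, Nat.lt_succ_self m⟩ := hS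
    subst hS'
    have h3 := (even_main x m hm hn y ⟨0, Nat.succ_pos m⟩ (by show 0 < m; omega) hmem).2.2.1
      (by simpa using hy)
    simpa using h3

end Even

theorem nfa_complexity_le_half_add_one (α : Type) [Fintype α]
    (hcard : 2 ≤ Fintype.card α) (x : List α) (hx : x ≠ []) :
    ∃ (k : ℕ) (M : NFA α (Fin k)), ExactAccepts M x ∧ (k : ℚ) ≤ (x.length : ℚ) / 2 + 1 := by
  have hlen : 1 ≤ x.length := List.length_pos_iff.mpr hx
  rcases Nat.even_or_odd x.length with ⟨m, hme⟩ | ⟨m, hmo⟩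
  · -- even length
    have hm : 1 ≤ m := by omega
    have hn : x.length = 2 * m := by omega
    refine ⟨m + 1, evenNFA x m, even_exact x m hm hn, ?_⟩
    rw [hn]
    push_cast
    linarith
  · -- odd length
    have hn : x.length = 2 * m + 1 := by omega
    refine ⟨m + 1, oddNFA x m, odd_exact x m hn, ?_⟩
    rw [hn]
    push_cast
    linarith
end

section
/- Fix q ∈ (0,1/2) and a finite alphabet Σ containing the symbol 0. For every c ∈ ℕ there exists n ∈ ℕ such that every word x ∈ Σ^n whose Hamming weight (number of positions with letter ≠ 0) is at most c satisfies A_Ne(x) < q|x|, i.e., x ∈ L_q. -/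
noncomputable def ANe {α : Type} (x : List α) : ℕ :=
  sInf {k : ℕ | ∃ M : NFA α (Fin k), ExactAccepts M x}

section transport
variable {α σ τ : Type}

def NFA.relabel (M : NFA α σ) (e : σ ≃ τ) : NFA α τ where
  step t a := e '' M.step (e.symm t) a
  start := e '' M.start
  accept := e '' M.accept

theorem NFA.relabel_stepSet (M : NFA α σ) (e : σ ≃ τ) (S : Set σ) (a : α) :
    (M.relabel e).stepSet (e '' S) a = e '' M.stepSet S a := by
  ext t
  simp only [NFA.stepSet, Set.mem_iUnion, Set.mem_image, NFA.relabel]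
  constructor
  · rintro ⟨t', ⟨s, hs, rfl⟩, s', hs', rfl⟩
    exact ⟨s', ⟨s, hs, by simpa using hs'⟩, rfl⟩
  · rintro ⟨s', ⟨s, hs, hs'⟩, rfl⟩
    exact ⟨e s, ⟨s, hs, rfl⟩, s', by simpa using hs', rfl⟩

theorem NFA.relabel_evalFrom (M : NFA α σ) (e : σ ≃ τ) (S : Set σ) (w : List α) :
    (M.relabel e).evalFrom (e '' S) w = e '' M.evalFrom S w := by
  induction w using List.reverseRecOn with
  | nil => simp [NFA.evalFrom]
  | append_singleton w a ih =>
      rw [NFA.evalFrom_append, NFA.evalFrom_append, NFA.evalFrom_singleton,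
        NFA.evalFrom_singleton, ih,
        NFA.relabel_stepSet]

theorem NFA.relabel_accepts (M : NFA α σ) (e : σ ≃ τ) :
    (M.relabel e).accepts = M.accepts := by
  ext w
  rw [NFA.mem_accepts, NFA.mem_accepts]
  have h := NFA.relabel_evalFrom M e M.start w
  constructor
  · rintro ⟨t, ht, ht'⟩
    have hst : (M.relabel e).start = e '' M.start := rfl
    rw [hst, h] at ht'
    obtain ⟨s, hs, rfl⟩ := ht'
    obtain ⟨s', hs', hes⟩ := ht
    exact ⟨s, by rw [← e.injective hes]; exact hs', hs⟩
  · rintro ⟨s, hs, hs'⟩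
    refine ⟨e s, ⟨s, hs, rfl⟩, ?_⟩
    have hst : (M.relabel e).start = e '' M.start := rfl
    rw [hst, h]
    exact ⟨s, hs', rfl⟩

theorem ANe_le_card {α σ : Type} [Fintype σ] (M : NFA α σ) (x : List α)
    (h : ExactAccepts M x) : ANe x ≤ Fintype.card σ := by
  apply Nat.sInf_le
  refine ⟨M.relabel (Fintype.equivFin σ), ?_⟩
  unfold ExactAccepts at h ⊢
  rw [NFA.relabel_accepts]
  exact h
end transport


set_option linter.unusedSectionVars false
section lists
variable {α : Type} [DecidableEq α] (z : α)

/-- One step of the gap scanner. -/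
def scStep (z : α) : List ℕ × ℕ → α → List ℕ × ℕ :=
  fun gb a => if a = z then (gb.1, gb.2 + 1) else (gb.1 ++ [gb.2], 0)

/-- Scan a word into (completed gap lengths, current gap length). -/
def sc (z : α) (w : List α) : List ℕ × ℕ := w.foldl (scStep z) ([], 0)

@[simp] theorem sc_nil : sc z [] = ([], 0) := rfl

theorem sc_append_z (w : List α) : sc z (w ++ [z]) = ((sc z w).1, (sc z w).2 + 1) := by
  simp [sc, List.foldl_append, scStep]

theorem sc_append_ne (w : List α) {a : α} (ha : a ≠ z) :
    sc z (w ++ [a]) = ((sc z w).1 ++ [(sc z w).2], 0) := by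
  simp [sc, List.foldl_append, scStep, ha]

theorem filter_append_z (w : List α) :
    (w ++ [z]).filter (fun a => a ≠ z) = w.filter (fun a => a ≠ z) := by
  simp

theorem filter_append_ne (w : List α) {a : α} (ha : a ≠ z) :
    (w ++ [a]).filter (fun b => b ≠ z) = w.filter (fun b => b ≠ z) ++ [a] := by
  simp [ha]

theorem sc_length (w : List α) :
    (sc z w).1.length = (w.filter (fun a => a ≠ z)).length := by
  induction w using List.reverseRecOn with
  | nil => simp
  | append_singleton w a ih =>
      by_cases ha : a = z
      · subst ha; rw [sc_append_z, filter_append_z]; exact ih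
      · rw [sc_append_ne z w ha, filter_append_ne z w ha]; simp [ih]

theorem sc_total (w : List α) :
    (sc z w).1.sum + (sc z w).1.length + (sc z w).2 = w.length := by
  induction w using List.reverseRecOn with
  | nil => simp
  | append_singleton w a ih =>
      by_cases ha : a = z
      · subst ha; rw [sc_append_z]; simp only [List.length_append, List.length_singleton]; omega
      · rw [sc_append_ne z w ha]; simp only [List.sum_append, List.length_append,
          List.length_singleton, List.sum_cons, List.sum_nil]; simp at ih ⊢; omega

/-- Rebuild a word from gaps, letters and final gap. -/
def rebuild (z : α) : List ℕ → List α → ℕ → List α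
  | [], _, b => List.replicate b z
  | _ :: _, [], b => List.replicate b z
  | g :: gs, l :: ls, b => List.replicate g z ++ l :: rebuild z gs ls b

theorem rebuild_snoc_z (gs : List ℕ) (ls : List α) (b : ℕ) :
    rebuild z gs ls (b + 1) = rebuild z gs ls b ++ [z] := by
  induction gs generalizing ls with
  | nil => simp [rebuild, List.replicate_succ']
  | cons g gs ih =>
      cases ls with
      | nil => simp [rebuild, List.replicate_succ']
      | cons l ls => simp [rebuild, ih]

theorem rebuild_snoc_ne (gs : List ℕ) (ls : List α) (h : gs.length = ls.length) (b : ℕ) (a : α) :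
    rebuild z (gs ++ [b]) (ls ++ [a]) 0 = rebuild z gs ls b ++ [a] := by
  induction gs generalizing ls with
  | nil =>
      cases ls with
      | nil => simp [rebuild]
      | cons l ls => simp at h
  | cons g gs ih =>
      cases ls with
      | nil => simp at h
      | cons l ls =>
          simp only [List.length_cons, Nat.add_right_cancel_iff] at h
          simp [rebuild, ih ls h]

theorem sc_rebuild (w : List α) :
    rebuild z (sc z w).1 (w.filter (fun a => a ≠ z)) (sc z w).2 = w := by
  induction w using List.reverseRecOn with
  | nil => simp [rebuild]
  | append_singleton w a ih =>
      by_cases ha : a = z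
      · subst ha
        rw [sc_append_z, filter_append_z, rebuild_snoc_z, ih]
      · rw [sc_append_ne z w ha, filter_append_ne z w ha,
          rebuild_snoc_ne z _ _ (by rw [sc_length]) _ a, ih]

end lists

theorem getD_le_sum (g : List ℕ) (i : ℕ) : g.getD i 0 ≤ g.sum := by
  induction g generalizing i with
  | nil => simp
  | cons a g ih =>
      cases i with
      | zero => simp
      | succ i => simpa using le_trans (ih i) (Nat.le_add_left _ _)

theorem sum_eq_sum_getD (g : List ℕ) :
    g.sum = ∑ i ∈ Finset.range g.length, g.getD i 0 := by
  induction g with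
  | nil => simp
  | cons a g ih =>
      rw [List.sum_cons, ih, List.length_cons, Finset.sum_range_succ']
      simp [add_comm]

theorem list_ext_getD (g h : List ℕ) (hl : g.length = h.length)
    (he : ∀ i < g.length, g.getD i 0 = h.getD i 0) : g = h := by
  induction g generalizing h with
  | nil => cases h with | nil => rfl | cons b h => simp at hl
  | cons a g ih =>
      cases h with
      | nil => simp at hl
      | cons b h =>
          simp only [List.length_cons, Nat.add_right_cancel_iff] at hl
          have h0 := he 0 (by simp)
          simp only [List.getD_cons_zero] at h0
          subst h0
          have : g = h := ih h hl (fun i hi => by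
            have := he (i + 1) (by simp; omega)
            simpa using this)
          rw [this]


theorem digits_unique (Mv : ℕ) (hM : 2 ≤ Mv) :
    ∀ (m : ℕ) (e : ℕ → ℤ), (∀ i < m, 2 * |e i| < Mv) →
      (∑ i ∈ Finset.range m, e i * (Mv : ℤ) ^ i) = 0 → ∀ i < m, e i = 0 := by
  intro m
  induction m with
  | zero => intro e _ _ i hi; omega
  | succ m ih =>
      intro e hb hs i hi
      rw [Finset.sum_range_succ'] at hs
      have hfac : ∑ i ∈ Finset.range m, e (i + 1) * (Mv : ℤ) ^ (i + 1)
          = (Mv : ℤ) * ∑ i ∈ Finset.range m, e (i + 1) * (Mv : ℤ) ^ i := by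
        rw [Finset.mul_sum]; apply Finset.sum_congr rfl; intro j _; ring
      simp only [pow_zero, mul_one] at hs
      rw [hfac] at hs
      have hdvd : (Mv : ℤ) ∣ e 0 := ⟨-(∑ i ∈ Finset.range m, e (i + 1) * (Mv : ℤ) ^ i), by linarith⟩
      have he0 : e 0 = 0 := by
        have hb0 := hb 0 (Nat.succ_pos m)
        have habs : |e 0| < (Mv : ℤ) := by
          have := abs_nonneg (e 0); linarith
        obtain ⟨t, ht⟩ := hdvd
        rcases eq_or_ne t 0 with rfl | h0
        · simpa using ht
        · exfalso
          have h1 : 1 ≤ |t| := by have := abs_pos.mpr h0; linarith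
          have hMnn : (0:ℤ) ≤ (Mv:ℤ) := by positivity
          have : (Mv:ℤ) ≤ |e 0| := by
            rw [ht, abs_mul, abs_of_nonneg hMnn]; nlinarith
          linarith
      rw [he0, add_zero] at hs
      have hM0 : (Mv : ℤ) ≠ 0 := by positivity
      have hs' : ∑ i ∈ Finset.range m, e (i + 1) * (Mv : ℤ) ^ i = 0 := by
        exact (mul_eq_zero.mp hs).resolve_left hM0
      cases i with
      | zero => exact he0
      | succ j =>
        have := ih (fun i => e (i + 1)) (fun i hi' => hb (i + 1) (by omega)) hs' j (by omega)
        simpa using this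

theorem geom_bound (Mv : ℕ) (hM : 2 ≤ Mv) :
    ∀ m : ℕ, (∑ i ∈ Finset.range m, (Mv : ℤ) ^ (i + 1)) < (Mv : ℤ) ^ (m + 1) := by
  intro m
  induction m with
  | zero => simp; positivity
  | succ m ih =>
      rw [Finset.sum_range_succ]
      have h2 : (2 : ℤ) * (Mv : ℤ) ^ (m + 1) ≤ (Mv : ℤ) ^ (m + 2) := by
        rw [pow_succ ((Mv : ℤ)) (m+1)]
        have : (2 : ℤ) ≤ (Mv : ℤ) := by exact_mod_cast hM
        nlinarith [pow_pos (show (0:ℤ) < Mv by positivity) (m+1)]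
      linarith

theorem knapsack (Mv c k : ℕ) (hM : 2 ≤ Mv) (hk : k ≤ c) (f f' : ℕ → ℕ)
    (hcong : ∀ i ≤ k, f i % (2 * Mv ^ (c + 9) + Mv ^ (i + 1))
      = f' i % (2 * Mv ^ (c + 9) + Mv ^ (i + 1)))
    (hsum : ∑ i ∈ Finset.range (k + 1), f i = ∑ i ∈ Finset.range (k + 1), f' i)
    (hbound : ∀ i ≤ k, f i ≤ Mv ^ (c + 10)) (hbound' : ∀ i ≤ k, f' i ≤ Mv ^ (c + 10)) :
    ∀ i ≤ k, f i = f' i := by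
  set N : ℕ := 2 * Mv ^ (c + 9) with hN
  set p : ℕ → ℕ := fun i => N + Mv ^ (i + 1) with hp
  -- pass to integers
  set d : ℕ → ℤ := fun i => (f' i : ℤ) - (f i : ℤ) with hd
  have hdvd : ∀ i ≤ k, (p i : ℤ) ∣ d i := fun i hi =>
    Nat.ModEq.dvd (show f i ≡ f' i [MOD p i] from hcong i hi)
  set e : ℕ → ℤ := fun i => d i / (p i : ℤ) with he
  have hppos : ∀ i, 0 < p i := fun i => by positivity
  have hde : ∀ i ≤ k, d i = (p i : ℤ) * e i := fun i hi =>
    (Int.mul_ediv_cancel' (hdvd i hi)).symm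
  -- bound on |e i|
  have hdabs : ∀ i ≤ k, |d i| ≤ (Mv : ℤ) ^ (c + 10) := by
    intro i hi
    have h1 := hbound i hi; have h2 := hbound' i hi
    have h1' : ((f i : ℤ)) ≤ (Mv : ℤ) ^ (c + 10) := by exact_mod_cast h1
    have h2' : ((f' i : ℤ)) ≤ (Mv : ℤ) ^ (c + 10) := by exact_mod_cast h2
    have hf : (0:ℤ) ≤ (f i : ℤ) := Int.natCast_nonneg _
    have hf' : (0:ℤ) ≤ (f' i : ℤ) := Int.natCast_nonneg _
    rw [abs_le]
    constructor
    · simp only [hd]; linarith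
    · simp only [hd]; linarith
  have hebound : ∀ i ≤ k, 2 * |e i| < (Mv : ℤ) := by
    intro i hi
    rcases eq_or_ne (e i) 0 with h0 | h0
    · rw [h0]; simpa using (by exact_mod_cast (by omega : 0 < Mv) : (0:ℤ) < (Mv:ℤ))
    · have h1 : |d i| = (p i : ℤ) * |e i| := by
        rw [hde i hi, abs_mul, abs_of_nonneg (by positivity : (0:ℤ) ≤ (p i : ℤ))]
      have hei : 1 ≤ |e i| := by
        have := abs_pos.mpr h0; linarith
      have hplt : (N : ℤ) < (p i : ℤ) := by
        have hpos : 0 < Mv ^ (i + 1) := by positivity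
        have : (N : ℕ) < p i := by simp only [hp]; omega
        exact_mod_cast this
      have key : (N : ℤ) * |e i| < (Mv : ℤ) ^ (c + 10) := by
        calc (N : ℤ) * |e i| < (p i : ℤ) * |e i| := by
              exact mul_lt_mul_of_pos_right hplt (by linarith)
          _ = |d i| := h1.symm
          _ ≤ (Mv : ℤ) ^ (c + 10) := hdabs i hi
      -- N = 2 * Mv^(c+9), Mv^(c+10) = Mv^(c+9) * Mv
      have hNcast : (N : ℤ) = 2 * (Mv : ℤ) ^ (c + 9) := by push_cast [hN]; ring
      have hpow : (Mv : ℤ) ^ (c + 10) = (Mv : ℤ) ^ (c + 9) * Mv := by ring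
      rw [hNcast, hpow] at key
      have hpc : (0:ℤ) < (Mv : ℤ) ^ (c + 9) := by positivity
      nlinarith
  -- total sum of d is zero
  have hdsum : ∑ i ∈ Finset.range (k + 1), d i = 0 := by
    simp only [hd, Finset.sum_sub_distrib]
    have : (∑ i ∈ Finset.range (k + 1), (f' i : ℤ)) = ∑ i ∈ Finset.range (k + 1), (f i : ℤ) := by
      exact_mod_cast congrArg (Nat.cast : ℕ → ℤ) hsum.symm
    rw [this]; ring
  have hes : ∑ i ∈ Finset.range (k + 1), (p i : ℤ) * e i = 0 := by
    rw [← hdsum]; apply Finset.sum_congr rfl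
    intro i hi
    exact (hde i (by simpa [Nat.lt_succ_iff] using hi)).symm
  -- split into N * S + T = 0
  have hsplit : (N : ℤ) * (∑ i ∈ Finset.range (k + 1), e i)
      + (∑ i ∈ Finset.range (k + 1), e i * (Mv : ℤ) ^ (i + 1)) = 0 := by
    rw [← hes, Finset.mul_sum, ← Finset.sum_add_distrib]
    apply Finset.sum_congr rfl
    intro i _
    have : (p i : ℤ) = (N : ℤ) + (Mv : ℤ) ^ (i + 1) := by push_cast [hp]; ring
    rw [this]; ring
  set S := ∑ i ∈ Finset.range (k + 1), e i with hS
  set T := ∑ i ∈ Finset.range (k + 1), e i * (Mv : ℤ) ^ (i + 1) with hT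
  have hTabs : |T| ≤ (Mv : ℤ) ^ (k + 3) := by
    calc |T| ≤ ∑ i ∈ Finset.range (k + 1), |e i * (Mv : ℤ) ^ (i + 1)| := Finset.abs_sum_le_sum_abs _ _
      _ ≤ ∑ i ∈ Finset.range (k + 1), (Mv : ℤ) * (Mv : ℤ) ^ (i + 1) := by
          apply Finset.sum_le_sum
          intro i hi
          rw [abs_mul, abs_of_nonneg (by positivity : (0:ℤ) ≤ (Mv : ℤ) ^ (i+1))]
          apply mul_le_mul_of_nonneg_right _ (by positivity)
          have := hebound i (by simpa [Nat.lt_succ_iff] using hi)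
          have := abs_nonneg (e i)
          linarith
      _ = (Mv : ℤ) * ∑ i ∈ Finset.range (k + 1), (Mv : ℤ) ^ (i + 1) := by rw [Finset.mul_sum]
      _ ≤ (Mv : ℤ) * (Mv : ℤ) ^ (k + 2) := by
          exact mul_le_mul_of_nonneg_left (le_of_lt (geom_bound Mv hM (k+1))) (by positivity)
      _ = (Mv : ℤ) ^ (k + 3) := by ring
  have hTN : |T| < (N : ℤ) := by
    have h1 : (Mv : ℤ) ^ (k + 3) ≤ (Mv : ℤ) ^ (c + 9) := by
      apply pow_le_pow_right₀ (by exact_mod_cast (by omega : 1 ≤ Mv)) (by omega)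
    have hNcast : (N : ℤ) = 2 * (Mv : ℤ) ^ (c + 9) := by push_cast [hN]; ring
    have : (0:ℤ) < (Mv:ℤ)^(c+9) := by positivity
    rw [hNcast]; linarith
  have hS0 : S = 0 := by
    by_contra h0
    have h1 : 1 ≤ |S| := by have := abs_pos.mpr h0; linarith
    have h2 : (N : ℤ) ≤ (N : ℤ) * |S| := by
      nlinarith [show (0:ℤ) ≤ (N:ℤ) by positivity]
    have h3 : (N : ℤ) * |S| = |T| := by
      rw [← abs_of_nonneg (show (0:ℤ) ≤ (N:ℤ) by positivity), ← abs_mul]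
      have : (N : ℤ) * S = -T := by linarith
      rw [this, abs_neg]
    linarith
  have hT0 : T = 0 := by rw [hS0] at hsplit; linarith
  -- peel the factor Mv
  have hT' : ∑ i ∈ Finset.range (k + 1), e i * (Mv : ℤ) ^ i = 0 := by
    have hfac : T = (Mv : ℤ) * ∑ i ∈ Finset.range (k + 1), e i * (Mv : ℤ) ^ i := by
      rw [hT, Finset.mul_sum]; apply Finset.sum_congr rfl; intro i _; ring
    rw [hT0] at hfac
    have hM0 : (Mv : ℤ) ≠ 0 := by positivity
    exact (mul_eq_zero.mp hfac.symm).resolve_left hM0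
  have hez : ∀ i < k + 1, e i = 0 :=
    digits_unique Mv hM (k + 1) e (fun i hi => hebound i (by omega)) hT' 
  intro i hi
  have : d i = 0 := by rw [hde i hi, hez i (by omega)]; ring
  have : (f' i : ℤ) = (f i : ℤ) := by simp only [hd] at this; linarith
  exact_mod_cast this.symm




theorem take_succ_getD {α : Type} (L : List α) (z : α) {n : ℕ} (h : n < L.length) :
    L.take (n + 1) = L.take n ++ [L.getD n z] := by
  rw [List.take_succ, List.getElem?_eq_getElem h, List.getD_eq_getElem L z h]
  rfl

section machine
variable {α : Type} [DecidableEq α]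

def gapP (N Mv i : ℕ) : ℕ := N + Mv ^ (i + 1)

theorem gapP_pos {N : ℕ} (Mv : ℕ) (hN : 0 < N) (i : ℕ) : 0 < gapP N Mv i :=
  Nat.lt_of_lt_of_le hN (Nat.le_add_right _ _)

theorem gapP_le {N Mv : ℕ} (hM : 1 ≤ Mv) {i k : ℕ} (h : i ≤ k) :
    gapP N Mv i ≤ gapP N Mv k :=
  Nat.add_le_add_left (Nat.pow_le_pow_right hM (Nat.succ_le_succ h)) N

def gapStep (z : α) (k N Mv : ℕ) (hN : 0 < N) (hM : 1 ≤ Mv) (G : List ℕ) (L : List α) :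
    Option (Fin (k + 1) × Fin (gapP N Mv k)) → α → Option (Fin (k + 1) × Fin (gapP N Mv k))
  | none, _ => none
  | some (j, s), a =>
      if a = z then
        some (j, ⟨(s.val + 1) % gapP N Mv j.val,
          lt_of_lt_of_le (Nat.mod_lt _ (gapP_pos Mv hN _))
            (gapP_le hM (Nat.lt_succ_iff.mp j.isLt))⟩)
      else if h : j.val < k ∧ s.val = G.getD j.val 0 % gapP N Mv j.val ∧ a = L.getD j.val z then
        some (⟨j.val + 1, Nat.succ_lt_succ h.1⟩, ⟨0, gapP_pos Mv hN k⟩)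
      else none

theorem gapStep_some (z : α) (k N Mv : ℕ) (hN : 0 < N) (hM : 1 ≤ Mv) (G : List ℕ)
    (L : List α) (j : Fin (k + 1)) (s : Fin (gapP N Mv k)) (a : α) :
    gapStep z k N Mv hN hM G L (some (j, s)) a =
      if a = z then
        some (j, ⟨(s.val + 1) % gapP N Mv j.val,
          lt_of_lt_of_le (Nat.mod_lt _ (gapP_pos Mv hN _))
            (gapP_le hM (Nat.lt_succ_iff.mp j.isLt))⟩)
      else if h : j.val < k ∧ s.val = G.getD j.val 0 % gapP N Mv j.val ∧ a = L.getD j.val z then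
        some (⟨j.val + 1, Nat.succ_lt_succ h.1⟩, ⟨0, gapP_pos Mv hN k⟩)
      else none := rfl

def gapDFA (z : α) (k N Mv : ℕ) (hN : 0 < N) (hM : 1 ≤ Mv) (G : List ℕ) (glast : ℕ)
    (L : List α) : DFA α (Option (Fin (k + 1) × Fin (gapP N Mv k))) where
  step := gapStep z k N Mv hN hM G L
  start := some (⟨0, Nat.succ_pos k⟩, ⟨0, gapP_pos Mv hN k⟩)
  accept := {some (⟨k, Nat.lt_succ_self k⟩,
    ⟨glast % gapP N Mv k, Nat.mod_lt _ (gapP_pos Mv hN k)⟩)}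

def gapCond (z : α) (k N Mv : ℕ) (G : List ℕ) (L : List α) (w : List α) : Prop :=
  (sc z w).1.length ≤ k ∧
  (∀ i < (sc z w).1.length,
    (sc z w).1.getD i 0 % gapP N Mv i = G.getD i 0 % gapP N Mv i) ∧
  w.filter (fun a => a ≠ z) = L.take (sc z w).1.length

theorem gapCond_nil (z : α) (k N Mv : ℕ) (G : List ℕ) (L : List α) :
    gapCond z k N Mv G L [] := by
  refine ⟨by simp, by simp, by simp⟩

open scoped Classical in
theorem gapDFA_eval (z : α) (k N Mv : ℕ) (hN : 0 < N) (hM : 1 ≤ Mv) (G : List ℕ)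
    (glast : ℕ) (L : List α) (hL : k ≤ L.length) (w : List α) :
    (gapDFA z k N Mv hN hM G glast L).eval w =
      if h : gapCond z k N Mv G L w then
        some (⟨(sc z w).1.length, Nat.lt_succ_of_le h.1⟩,
          ⟨(sc z w).2 % gapP N Mv (sc z w).1.length,
            lt_of_lt_of_le (Nat.mod_lt _ (gapP_pos Mv hN _)) (gapP_le hM h.1)⟩)
      else none := by
  induction w using List.reverseRecOn with
  | nil =>
      rw [dif_pos (gapCond_nil z k N Mv G L)]
      show (gapDFA z k N Mv hN hM G glast L).start = _
      simp only [gapDFA, sc_nil, Option.some.injEq, Prod.mk.injEq, Fin.mk.injEq]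
      exact ⟨rfl, (Nat.zero_mod _).symm⟩
  | append_singleton w a ih =>
      rw [DFA.eval_append_singleton, ih]
      by_cases hc : gapCond z k N Mv G L w
      · rw [dif_pos hc]
        rw [show (gapDFA z k N Mv hN hM G glast L).step = gapStep z k N Mv hN hM G L from rfl,
          gapStep_some]
        by_cases ha : a = z
        · rw [if_pos ha, ha]
          have hc' : gapCond z k N Mv G L (w ++ [z]) := by
            obtain ⟨h1, h2, h3⟩ := hc
            refine ⟨?_, ?_, ?_⟩
            · rw [sc_append_z]; exact h1
            · rw [sc_append_z]; exact h2
            · rw [sc_append_z, filter_append_z]; exact h3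
          rw [dif_pos hc']
          simp only [sc_append_z, Option.some.injEq, Prod.mk.injEq, Fin.mk.injEq]
          exact ⟨trivial, Nat.mod_add_mod _ _ _⟩
        · rw [if_neg ha]
          by_cases htr : (sc z w).1.length < k ∧
              (sc z w).2 % gapP N Mv (sc z w).1.length
                = G.getD (sc z w).1.length 0 % gapP N Mv (sc z w).1.length ∧
              a = L.getD (sc z w).1.length z
          · have hstep : ((⟨(sc z w).1.length, Nat.lt_succ_of_le hc.1⟩ : Fin (k+1)).val < k ∧
                (⟨(sc z w).2 % gapP N Mv (sc z w).1.length,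
                    lt_of_lt_of_le (Nat.mod_lt _ (gapP_pos Mv hN _)) (gapP_le hM hc.1)⟩ :
                    Fin (gapP N Mv k)).val
                  = G.getD (⟨(sc z w).1.length, Nat.lt_succ_of_le hc.1⟩ : Fin (k+1)).val 0
                      % gapP N Mv (⟨(sc z w).1.length, Nat.lt_succ_of_le hc.1⟩ : Fin (k+1)).val ∧
                a = L.getD (⟨(sc z w).1.length, Nat.lt_succ_of_le hc.1⟩ : Fin (k+1)).val z) :=
              ⟨htr.1, htr.2.1, htr.2.2⟩
            rw [dif_pos hstep]
            have hc' : gapCond z k N Mv G L (w ++ [a]) := by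
              obtain ⟨h1, h2, h3⟩ := hc
              refine ⟨?_, ?_, ?_⟩
              · rw [sc_append_ne z w ha]; simp only [List.length_append,
                  List.length_singleton]; omega
              · rw [sc_append_ne z w ha]
                simp only [List.length_append, List.length_singleton]
                intro i hi
                rcases Nat.lt_or_ge i (sc z w).1.length with hlt | hge
                · rw [List.getD_append _ _ _ _ hlt]; exact h2 i hlt
                · have hieq : i = (sc z w).1.length := by omega
                  subst hieq
                  rw [List.getD_append_right _ _ _ _ (le_refl _)]
                  simpa using htr.2.1
              · rw [sc_append_ne z w ha, filter_append_ne z w ha]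
                simp only [List.length_append, List.length_singleton]
                rw [h3, htr.2.2, ← take_succ_getD L z (by omega)]
            rw [dif_pos hc']
            simp only [sc_append_ne z w ha, Option.some.injEq, Prod.mk.injEq, Fin.mk.injEq,
              List.length_append, List.length_singleton]
            exact ⟨trivial, (Nat.zero_mod _).symm⟩
          · have hstep : ¬ ((⟨(sc z w).1.length, Nat.lt_succ_of_le hc.1⟩ : Fin (k+1)).val < k ∧
                (⟨(sc z w).2 % gapP N Mv (sc z w).1.length,
                    lt_of_lt_of_le (Nat.mod_lt _ (gapP_pos Mv hN _)) (gapP_le hM hc.1)⟩ :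
                    Fin (gapP N Mv k)).val
                  = G.getD (⟨(sc z w).1.length, Nat.lt_succ_of_le hc.1⟩ : Fin (k+1)).val 0
                      % gapP N Mv (⟨(sc z w).1.length, Nat.lt_succ_of_le hc.1⟩ : Fin (k+1)).val ∧
                a = L.getD (⟨(sc z w).1.length, Nat.lt_succ_of_le hc.1⟩ : Fin (k+1)).val z) := by
              intro hx; exact htr ⟨hx.1, hx.2.1, hx.2.2⟩
            rw [dif_neg hstep]
            have hc' : ¬ gapCond z k N Mv G L (w ++ [a]) := by
              intro hcc
              apply htr
              obtain ⟨h1, h2, h3⟩ := hcc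
              rw [sc_append_ne z w ha] at h1 h2
              rw [sc_append_ne z w ha, filter_append_ne z w ha] at h3
              simp only [List.length_append, List.length_singleton] at h1 h2 h3
              have hlt : (sc z w).1.length < k := by omega
              refine ⟨hlt, ?_, ?_⟩
              · have := h2 (sc z w).1.length (by omega)
                rw [List.getD_append_right _ _ _ _ (le_refl _)] at this
                simpa using this
              · have hts : L.take ((sc z w).1.length + 1)
                    = L.take (sc z w).1.length ++ [L.getD (sc z w).1.length z] :=
                  take_succ_getD L z (by omega)
                rw [hts] at h3
                have hlen : (w.filter (fun b => b ≠ z)).length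
                    = (L.take (sc z w).1.length).length := by
                  rw [← sc_length, List.length_take]
                  omega
                have := (List.append_inj h3 hlen).2
                simpa using this
            rw [dif_neg hc']
      · rw [dif_neg hc]
        have hc' : ¬ gapCond z k N Mv G L (w ++ [a]) := by
          intro hcc
          apply hc
          by_cases ha : a = z
          · subst ha
            obtain ⟨h1, h2, h3⟩ := hcc
            rw [sc_append_z] at h1 h2
            rw [sc_append_z, filter_append_z] at h3
            exact ⟨h1, h2, h3⟩
          · obtain ⟨h1, h2, h3⟩ := hcc
            rw [sc_append_ne z w ha] at h1 h2
            rw [sc_append_ne z w ha, filter_append_ne z w ha] at h3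
            simp only [List.length_append, List.length_singleton] at h1 h2 h3
            refine ⟨by omega, ?_, ?_⟩
            · intro i hi
              have := h2 i (by omega)
              rwa [List.getD_append _ _ _ _ hi] at this
            · have hts : L.take ((sc z w).1.length + 1)
                  = L.take (sc z w).1.length ++ [L.getD (sc z w).1.length z] :=
                take_succ_getD L z (by omega)
              rw [hts] at h3
              have hlen : (w.filter (fun b => b ≠ z)).length
                  = (L.take (sc z w).1.length).length := by
                rw [← sc_length, List.length_take]; omega
              exact (List.append_inj h3 hlen).1
        rw [dif_neg hc']
        rfl

end machine


set_option maxHeartbeats 1000000 in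
theorem gap_lemma (α : Type) [Fintype α] [DecidableEq α] (z : α)
    (q : ℚ) (hq0 : 0 < q) (hq : q < 1/2) (c : ℕ) :
    ∃ n : ℕ, ∀ x : List α, x.length = n →
      (x.filter (fun a => a ≠ z)).length ≤ c →
      (ANe x : ℚ) < q * (x.length : ℚ) := by
  set Mv : ℕ := ⌈(5 * ((c : ℚ) + 1)) / q⌉₊ + 2 with hMvdef
  have hM2 : 2 ≤ Mv := by omega
  have hM1 : 1 ≤ Mv := by omega
  refine ⟨Mv ^ (c + 10), ?_⟩
  intro x hlen hwt
  classical
  set k := (x.filter (fun a => a ≠ z)).length with hk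
  set L := x.filter (fun a => a ≠ z) with hLdef
  set G := (sc z x).1 with hGdef
  set glast := (sc z x).2 with hgl
  set N := 2 * Mv ^ (c + 9) with hNdef
  have hN : 0 < N := by positivity
  have hGlen : G.length = k := by rw [hk, hGdef]; exact sc_length z x
  have hLlen : L.length = k := rfl
  have hLk : k ≤ L.length := le_of_eq hLlen.symm
  have hcx : gapCond z k N Mv G L x := by
    refine ⟨le_of_eq hGlen, fun i hi => rfl, ?_⟩
    show x.filter (fun a => a ≠ z) = L.take G.length
    rw [hGlen, ← hLlen, List.take_length]
  have heval := gapDFA_eval z k N Mv hN hM1 G glast L hLk x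
  rw [dif_pos hcx] at heval
  have haccx : x ∈ (gapDFA z k N Mv hN hM1 G glast L).accepts := by
    rw [DFA.mem_accepts, heval]
    have hxl : (sc z x).1.length = k := hGlen
    simp only [gapDFA, Set.mem_singleton_iff, Option.some.injEq, Prod.mk.injEq, Fin.mk.injEq,
      hxl]
    exact ⟨trivial, rfl⟩
  have hex : ExactAccepts (gapDFA z k N Mv hN hM1 G glast L).toNFA x := by
    constructor
    · rw [DFA.toNFA_correct]; exact haccx
    · intro y hylen hyacc
      rw [DFA.toNFA_correct, DFA.mem_accepts] at hyacc
      rw [gapDFA_eval z k N Mv hN hM1 G glast L hLk y] at hyacc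
      by_cases hcy : gapCond z k N Mv G L y
      · rw [dif_pos hcy] at hyacc
        simp only [gapDFA, Set.mem_singleton_iff, Option.some.injEq, Prod.mk.injEq,
          Fin.mk.injEq] at hyacc
        obtain ⟨hjk, hmod⟩ := hyacc
        rw [hjk] at hmod
        obtain ⟨hy1, hy2, hy3⟩ := hcy
        have hsumy := sc_total z y
        have hsumx := sc_total z x
        set f : ℕ → ℕ := fun i => if i < k then (sc z y).1.getD i 0 else (sc z y).2 with hf
        set f' : ℕ → ℕ := fun i => if i < k then G.getD i 0 else glast with hf'
        have sum_aux : ∀ (g : List ℕ) (b : ℕ), g.length = k →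
            (∑ i ∈ Finset.range (k + 1), (if i < k then g.getD i 0 else b)) = g.sum + b := by
          intro g b hg
          rw [Finset.sum_range_succ, if_neg (lt_irrefl k)]
          congr 1
          calc ∑ i ∈ Finset.range k, (if i < k then g.getD i 0 else b)
              = ∑ i ∈ Finset.range k, g.getD i 0 :=
                Finset.sum_congr rfl (fun i hi => if_pos (Finset.mem_range.mp hi))
            _ = g.sum := by rw [sum_eq_sum_getD, hg]
        have hknap := knapsack Mv c k hM2 hwt f f' ?_ ?_ ?_ ?_
        · have hglasteq : (sc z y).2 = glast := by
            have := hknap k (le_refl k)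
            simpa [hf, hf'] using this
          have hG1 : (sc z y).1 = G := by
            refine list_ext_getD _ _ (by rw [hjk, hGlen]) (fun i hi => ?_)
            have hik : i < k := by rw [← hjk]; exact hi
            have := hknap i (le_of_lt hik)
            simpa [hf, hf', if_pos hik] using this
          have hfy : y.filter (fun a => a ≠ z) = L := by
            rw [hy3, hjk, ← hLlen, List.take_length]
          calc y = rebuild z (sc z y).1 (y.filter (fun a => a ≠ z)) (sc z y).2 :=
                (sc_rebuild z y).symm
            _ = rebuild z G L glast := by rw [hG1, hglasteq, hfy]
            _ = x := sc_rebuild z x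
        · -- congruences
          intro i hi
          show f i % gapP N Mv i = f' i % gapP N Mv i
          rcases Nat.lt_or_ge i k with hik | hik
          · simp only [hf, hf', if_pos hik]
            exact hy2 i (by rw [hjk]; exact hik)
          · have hieq : i = k := by omega
            subst hieq
            simp only [hf, hf', if_neg (lt_irrefl k)]
            exact hmod
        · -- sums
          rw [sum_aux (sc z y).1 (sc z y).2 hjk, sum_aux G glast hGlen]
          have h1 : G.sum + k + glast = x.length := by
            rw [← hGlen]; exact hsumx
          have h2 : (sc z y).1.sum + k + (sc z y).2 = y.length := by
            rw [← hjk]; exact hsumy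
          omega
        · -- bounds for y
          intro i hi
          have hgd := getD_le_sum (sc z y).1 i
          have h2 : (sc z y).1.sum + k + (sc z y).2 = y.length := by
            rw [← hjk]; exact hsumy
          simp only [hf]
          have hyl : y.length = Mv ^ (c + 10) := by rw [hylen, hlen]
          split <;> omega
        · -- bounds for x
          intro i hi
          have hgd := getD_le_sum G i
          have h1 : G.sum + k + glast = x.length := by
            rw [← hGlen]; exact hsumx
          simp only [hf']
          split <;> omega
      · rw [dif_neg hcy] at hyacc
        simp only [gapDFA, Set.mem_singleton_iff] at hyacc
        exact absurd hyacc (by simp)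
  have hANe := ANe_le_card (gapDFA z k N Mv hN hM1 G glast L).toNFA x hex
  have hcard : Fintype.card (Option (Fin (k + 1) × Fin (gapP N Mv k)))
      = (k + 1) * gapP N Mv k + 1 := by simp
  rw [hcard] at hANe
  have hgapPle : gapP N Mv k ≤ 3 * Mv ^ (c + 9) := by
    have hkc : Mv ^ (k + 1) ≤ Mv ^ (c + 9) := Nat.pow_le_pow_right hM1 (by omega)
    have : gapP N Mv k = N + Mv ^ (k + 1) := rfl
    omega
  have hX1 : 0 < (c + 1) * Mv ^ (c + 9) := by positivity
  have hcnt : ANe x ≤ 4 * ((c + 1) * Mv ^ (c + 9)) := by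
    have h1 : (k + 1) * gapP N Mv k ≤ (c + 1) * (3 * Mv ^ (c + 9)) :=
      Nat.mul_le_mul (by omega) hgapPle
    have h3 : (c + 1) * (3 * Mv ^ (c + 9)) = 3 * ((c + 1) * Mv ^ (c + 9)) := by ring
    omega
  have hcast : (ANe x : ℚ) ≤ 4 * ((c : ℚ) + 1) * (Mv : ℚ) ^ (c + 9) := by
    calc (ANe x : ℚ) ≤ ((4 * ((c + 1) * Mv ^ (c + 9)) : ℕ) : ℚ) := by exact_mod_cast hcnt
      _ = 4 * ((c : ℚ) + 1) * (Mv : ℚ) ^ (c + 9) := by push_cast; ring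
  have hqM : 5 * ((c : ℚ) + 1) < q * (Mv : ℚ) := by
    have hceil : (5 * ((c : ℚ) + 1)) / q ≤ ((⌈(5 * ((c : ℚ) + 1)) / q⌉₊ : ℕ) : ℚ) :=
      Nat.le_ceil _
    have hMvcast : ((Mv : ℚ)) = ((⌈(5 * ((c : ℚ) + 1)) / q⌉₊ : ℕ) : ℚ) + 2 := by
      rw [hMvdef]; push_cast; ring
    have hlt : (5 * ((c : ℚ) + 1)) / q < (Mv : ℚ) := by rw [hMvcast]; linarith
    calc 5 * ((c : ℚ) + 1) = ((5 * ((c : ℚ) + 1)) / q) * q := by field_simp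
      _ < (Mv : ℚ) * q := mul_lt_mul_of_pos_right hlt hq0
      _ = q * (Mv : ℚ) := mul_comm _ _
  have hpow : (0 : ℚ) < (Mv : ℚ) ^ (c + 9) := by positivity
  have hfin : 4 * ((c : ℚ) + 1) * (Mv : ℚ) ^ (c + 9) < q * (Mv : ℚ) ^ (c + 10) := by
    have h10 : ((Mv : ℚ)) ^ (c + 10) = (Mv : ℚ) * (Mv : ℚ) ^ (c + 9) := by ring
    rw [h10]
    have hc1 : (0 : ℚ) < (c : ℚ) + 1 := by positivity
    nlinarith
  rw [hlen, Nat.cast_pow]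
  linarith
end

section
/- Fix q ∈ (0,1/2) and a finite alphabet Σ of cardinality k ≥ 2. There is a constant C such that for all n ≥ 4, every word x ∈ Σ^n with A_Ne(x) < qn has plain Kolmogorov complexity C_k(x) ≤ n − ((1−2q)/2)·√n + 5·log_k(n) + C. -/
set_option maxHeartbeats 1000000


/-- Plain Kolmogorov complexity of `x` relative to the machine `U`. -/
noncomputable def KC {k : ℕ} (U : List (Fin k) →. List (Fin k)) (x : List (Fin k)) : ℕ :=
  sInf {ℓ : ℕ | ∃ p : List (Fin k), x ∈ U p ∧ p.length = ℓ}

namespace KH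

variable {α : Type}

/-- `x` has a repeated factor of length `ℓ` (two occurrences at distinct starts,
possibly overlapping). -/
def RepFactor (x : List α) (ℓ : ℕ) : Prop :=
  ∃ i j : ℕ, i < j ∧ j + ℓ ≤ x.length ∧ (x.drop i).take ℓ = (x.drop j).take ℓ

lemma getElem_idx_congr (l : List α) {s t : ℕ} (h : s = t) (hs : s < l.length) :
    l[s] = l[t]'(h ▸ hs) := by subst h; rfl

/-- segment `x[a..b)` -/
def seg (x : List α) (a b : ℕ) : List α := (x.drop a).take (b - a)

lemma seg_length {x : List α} {a b : ℕ} (hb : b ≤ x.length) :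
    (seg x a b).length = b - a := by
  simp [seg]; omega

lemma seg_zero_length (x : List α) : seg x 0 x.length = x := by
  simp [seg]

lemma seg_succ {x : List α} {a b : ℕ} (hab : a ≤ b) (hb : b < x.length) :
    seg x a (b + 1) = seg x a b ++ [x[b]] := by
  unfold seg
  have h1 : b + 1 - a = (b - a) + 1 := by omega
  rw [h1, List.take_succ]
  congr 1
  have h2 : b - a < (x.drop a).length := by rw [List.length_drop]; omega
  rw [List.getElem?_eq_getElem h2]
  simp only [Option.toList_some, List.getElem_drop]
  have h3 : a + (b - a) = b := by omega
  rw [getElem_idx_congr x h3]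

lemma rep_of_zero {x : List α} (hx : 1 ≤ x.length) : RepFactor x 0 :=
  ⟨0, x.length, by omega, by omega, by simp⟩

lemma rep_le {x : List α} {ℓ : ℕ} (h : RepFactor x ℓ) : ℓ ≤ x.length := by
  obtain ⟨i, j, hij, hl, _⟩ := h; omega

lemma getElem_congr' (l l' : List α) (h : l = l') (t : ℕ) (h1 : t < l.length)
    (h2 : t < l'.length) : l[t] = l'[t] := by
  subst h; rfl

/-- pointwise version of a repeated factor -/
lemma rep_pointwise {x : List α} {i j ℓ t : ℕ} (d : α)
    (h : (x.drop i).take ℓ = (x.drop j).take ℓ) (hjl : j + ℓ ≤ x.length) (hij : i < j)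
    (ht : t < ℓ) :
    x.getD (i + t) d = x.getD (j + t) d := by
  have hti : t < ((x.drop i).take ℓ).length := by
    rw [List.length_take, List.length_drop]; omega
  have htj : t < ((x.drop j).take ℓ).length := by
    rw [List.length_take, List.length_drop]; omega
  have h1 := getElem_congr' _ _ h t hti htj
  rw [List.getElem_take, List.getElem_drop] at h1
  rw [List.getElem_take, List.getElem_drop] at h1
  rw [List.getD_eq_getElem x d (by omega), List.getD_eq_getElem x d (by omega)]
  exact h1

/-- period decomposition: values in the removed block can be recovered from
positions before `j`. -/
lemma rep_period {x : List α} {i j ℓ : ℕ} (d : α)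
    (h : (x.drop i).take ℓ = (x.drop j).take ℓ) (hjl : j + ℓ ≤ x.length) (hij : i < j) :
    ∀ t, t < ℓ → x.getD (j + t) d = x.getD (i + t % (j - i)) d := by
  intro t ht
  induction t using Nat.strong_induction_on with
  | _ t IH =>
  rcases lt_or_ge t (j - i) with hc | hc
  · rw [Nat.mod_eq_of_lt hc]
    exact (rep_pointwise d h hjl hij ht).symm
  · have hd : 0 < j - i := by omega
    have h1 : x.getD (j + t) d = x.getD (i + t) d :=
      (rep_pointwise d h hjl hij ht).symm
    have h2 : i + t = j + (t - (j - i)) := by omega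
    have h3 := IH (t - (j - i)) (by omega) (by omega)
    have h4 : t % (j - i) = (t - (j - i)) % (j - i) := Nat.mod_eq_sub_mod hc
    rw [h1, h2, h3, h4]

section NFAstuff

variable {σ : Type} (M : NFA α σ)

lemma stepSet_mono {S T : Set σ} (h : S ⊆ T) (a : α) : M.stepSet S a ⊆ M.stepSet T a := by
  intro s hs
  rw [NFA.mem_stepSet] at hs ⊢
  obtain ⟨t, ht, hst⟩ := hs
  exact ⟨t, h ht, hst⟩

lemma evalFrom_mono {S T : Set σ} (h : S ⊆ T) (l : List α) :
    M.evalFrom S l ⊆ M.evalFrom T l := by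
  induction l generalizing S T with
  | nil => simpa using h
  | cons a l IH =>
    have : M.evalFrom S (a :: l) = M.evalFrom (M.stepSet S a) l := rfl
    rw [this, show M.evalFrom T (a :: l) = M.evalFrom (M.stepSet T a) l from rfl]
    exact IH (stepSet_mono M h a)

lemma evalFrom_append (S : Set σ) (u v : List α) :
    M.evalFrom S (u ++ v) = M.evalFrom (M.evalFrom S u) v := by
  unfold NFA.evalFrom
  rw [List.foldl_append]

lemma mem_evalFrom_trans {S : Set σ} {s t : σ} {u v : List α}
    (hu : s ∈ M.evalFrom S u) (hv : t ∈ M.evalFrom {s} v) : t ∈ M.evalFrom S (u ++ v) := by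
  rw [evalFrom_append]
  exact evalFrom_mono M (by simpa using hu) v hv

/-- extraction of a run from acceptance -/
lemma exists_run {x : List α} (hx : x ∈ M.accepts) :
    ∃ r : ℕ → σ, r 0 ∈ M.start ∧ r x.length ∈ M.accept ∧
      ∀ i (h : i < x.length), r (i + 1) ∈ M.step (r i) x[i] := by
  obtain ⟨s, hacc, hev⟩ := hx
  suffices H : ∀ (l : List α) (S : Set σ) (s : σ), s ∈ M.evalFrom S l →
      ∃ r : ℕ → σ, r 0 ∈ S ∧ r l.length = s ∧
        ∀ i (h : i < l.length), r (i + 1) ∈ M.step (r i) l[i] by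
    obtain ⟨r, h0, hl, hstep⟩ := H x M.start s hev
    exact ⟨r, h0, by rwa [hl], hstep⟩
  intro l
  induction l using List.reverseRecOn with
  | nil => intro S s hs; exact ⟨fun _ => s, by simpa using hs, rfl, by simp⟩
  | append_singleton l a IH =>
    intro S s hs
    rw [NFA.evalFrom_append, NFA.evalFrom_singleton, NFA.mem_stepSet] at hs
    obtain ⟨t, ht, hst⟩ := hs
    obtain ⟨r, h0, hl, hstep⟩ := IH S t ht
    refine ⟨fun m => if m = l.length + 1 then s else r m, by simpa using h0, by simp, ?_⟩
    intro i hi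
    simp only [List.length_append, List.length_singleton] at hi
    rcases lt_or_ge i l.length with hc | hc
    · have e1 : (i = l.length + 1) = False := by simp; omega
      have e2 : (i + 1 = l.length + 1) = False := by simp; omega
      simp only [e1, e2, if_false]
      have : (l ++ [a])[i]'(by simp; omega) = l[i] := List.getElem_append_left _
      rw [this]
      exact hstep i hc
    · have hi' : i = l.length := by omega
      have e1 : (i + 1 = l.length + 1) = True := by simp [hi']
      have e2 : (i = l.length + 1) = False := by simp; omega
      simp only [e1, e2, if_true, if_false]
      have h3 : (l ++ [a])[i]'(by simp; omega) = a := by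
        rw [List.getElem_append_right (by omega)]
        simp [hi']
      rw [h3, hi', hl]
      exact hst


variable {x : List α} {r : ℕ → σ}

lemma run_seg (hr : ∀ i (h : i < x.length), r (i + 1) ∈ M.step (r i) x[i])
    {a b : ℕ} (hab : a ≤ b) (hb : b ≤ x.length) :
    r b ∈ M.evalFrom {r a} (seg x a b) := by
  induction b, hab using Nat.le_induction with
  | base =>
    have : seg x a a = [] := by simp [seg]
    rw [this]; exact rfl
  | succ b hab IH =>
    rw [seg_succ hab (by omega)]
    rw [NFA.evalFrom_append, NFA.evalFrom_singleton, NFA.mem_stepSet]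
    exact ⟨r b, IH (by omega), hr b (by omega)⟩

lemma run_seg' (hr : ∀ i (h : i < x.length), r (i + 1) ∈ M.step (r i) x[i])
    {a b : ℕ} (hab : a ≤ b) (hb : b ≤ x.length) {s : σ} (hs : r a = s) :
    r b ∈ M.evalFrom {s} (seg x a b) := hs ▸ run_seg M hr hab hb

lemma surgeryB (hex : ExactAccepts M x)
    (h0 : r 0 ∈ M.start) (hacc : r x.length ∈ M.accept)
    (hr : ∀ i (h : i < x.length), r (i + 1) ∈ M.step (r i) x[i])
    {p q d : ℕ} (hpq : p < q) (hd : 1 ≤ d) (hqd : q + d ≤ x.length)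
    (h1 : r p = r (p + d)) (h2 : r q = r (q + d)) :
    RepFactor x (q - p) := by
  set n := x.length with hn
  set A := seg x 0 p with hA
  set B := seg x (p + d) (q + d) with hB
  set C := seg x q (q + d) with hC
  set D := seg x (q + d) n with hD
  have hlA : A.length = p := by rw [hA, seg_length (by omega)]; omega
  have hlB : B.length = q - p := by rw [hB, seg_length (by omega)]; omega
  have hlC : C.length = d := by rw [hC, seg_length (by omega)]; omega
  have hlD : D.length = n - (q + d) := by rw [hD, seg_length (by omega)]
  have hacc' : A ++ (B ++ (C ++ D)) ∈ M.accepts := by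
    refine ⟨r n, hacc, ?_⟩
    have c1 : r p ∈ M.evalFrom M.start A :=
      evalFrom_mono M (by simpa using h0) _ (run_seg M hr (by omega) (by omega))
    have c2 : r (q + d) ∈ M.evalFrom {r p} B := run_seg' M hr (by omega) (by omega) h1.symm
    have c3' : r (q + d) ∈ M.evalFrom {r (q + d)} C := by
      have c3 : r (q + d) ∈ M.evalFrom {r q} C := run_seg M hr (by omega) (by omega)
      rwa [h2] at c3
    have c4 : r n ∈ M.evalFrom {r (q + d)} D := run_seg M hr (by omega) (by omega)
    exact mem_evalFrom_trans M c1 (mem_evalFrom_trans M c2 (mem_evalFrom_trans M c3' c4))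
  have hlen : (A ++ (B ++ (C ++ D))).length = x.length := by
    simp [hlA, hlB, hlC, hlD]; omega
  have heq : A ++ (B ++ (C ++ D)) = x := hex.2 _ hlen hacc'
  refine ⟨p, p + d, by omega, by omega, ?_⟩
  have d1 : (A ++ (B ++ (C ++ D))).drop p = B ++ (C ++ D) := by
    rw [← hlA]; exact List.drop_left
  have t1 : (B ++ (C ++ D)).take (q - p) = B := by
    rw [← hlB]; exact List.take_left
  have e1 := congrArg (fun l : List α => (l.drop p).take (q - p)) heq
  rw [d1, t1] at e1
  have e2 : B = (x.drop (p + d)).take (q - p) := by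
    have harith : q + d - (p + d) = q - p := by omega
    rw [hB, seg, harith]
  exact e1.symm.trans e2

lemma surgeryC (hex : ExactAccepts M x)
    (h0 : r 0 ∈ M.start) (hacc : r x.length ∈ M.accept)
    (hr : ∀ i (h : i < x.length), r (i + 1) ∈ M.step (r i) x[i])
    {p p' p'' : ℕ} (hpq : p < p') (hq : p' < p'') (hqd : p'' ≤ x.length)
    (h1 : r p = r p') (h2 : r p' = r p'') :
    RepFactor x (p'' - p') := by
  set n := x.length with hn
  set A := seg x 0 p with hA
  set B := seg x p' p'' with hB
  set C := seg x p p' with hC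
  set D := seg x p'' n with hD
  have hlA : A.length = p := by rw [hA, seg_length (by omega)]; omega
  have hlB : B.length = p'' - p' := by rw [hB, seg_length (by omega)]
  have hlC : C.length = p' - p := by rw [hC, seg_length (by omega)]
  have hlD : D.length = n - p'' := by rw [hD, seg_length (by omega)]
  have hacc' : A ++ (B ++ (C ++ D)) ∈ M.accepts := by
    refine ⟨r n, hacc, ?_⟩
    have c1 : r p ∈ M.evalFrom M.start A :=
      evalFrom_mono M (by simpa using h0) _ (run_seg M hr (by omega) (by omega))
    have c2 : r p'' ∈ M.evalFrom {r p} B := run_seg' M hr (by omega) (by omega) (by rw [← h1])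
    have c3 : r p' ∈ M.evalFrom {r p''} C := run_seg' M hr (by omega) (by omega) (by rw [h1, h2])
    have c4 : r n ∈ M.evalFrom {r p'} D := run_seg' M hr (by omega) (by omega) (by rw [h2])
    exact mem_evalFrom_trans M c1 (mem_evalFrom_trans M c2 (mem_evalFrom_trans M c3 c4))
  have hlen : (A ++ (B ++ (C ++ D))).length = x.length := by
    simp [hlA, hlB, hlC, hlD]; omega
  have heq : A ++ (B ++ (C ++ D)) = x := hex.2 _ hlen hacc'
  refine ⟨p, p', by omega, by omega, ?_⟩
  have d1 : (A ++ (B ++ (C ++ D))).drop p = B ++ (C ++ D) := by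
    rw [← hlA]; exact List.drop_left
  have t1 : (B ++ (C ++ D)).take (p'' - p') = B := by
    rw [← hlB]; exact List.take_left
  have e1 := congrArg (fun l : List α => (l.drop p).take (p'' - p')) heq
  rw [d1, t1] at e1
  exact e1.symm.trans (by rw [hB]; rfl)

end NFAstuff

lemma main_count {m : ℕ} (M : NFA α (Fin m)) {x : List α} (hex : ExactAccepts M x)
    (hn : 1 ≤ x.length) :
    x.length + 1 ≤ (sSup {ℓ | RepFactor x ℓ}) * (sSup {ℓ | RepFactor x ℓ} + 1) + 2 * m := by
  classical
  set n := x.length with hnn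
  set F := sSup {ℓ | RepFactor x ℓ} with hF
  have hFub : ∀ ℓ, RepFactor x ℓ → ℓ ≤ F := fun ℓ h =>
    le_csSup ⟨n, fun y hy => rep_le hy⟩ h
  obtain ⟨r, h0, hacc, hr⟩ := exists_run M hex.1
  set P := (Finset.range (n + 1)).filter (fun i => ∃ j, j < i ∧ r j = r i) with hP
  -- complement injects into states
  have hPc : ((Finset.range (n + 1)).filter (fun i => ¬ ∃ j, j < i ∧ r j = r i)).card ≤ m := by
    have := Finset.card_le_card_of_injOn (f := fun i => r i)
      (s := (Finset.range (n + 1)).filter (fun i => ¬ ∃ j, j < i ∧ r j = r i))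
      (t := Finset.univ) (fun a _ => Finset.mem_univ _) ?_
    · simpa using this
    · intro a ha b hb hab
      simp only [Finset.mem_coe, Finset.mem_filter, Finset.mem_range] at ha hb
      by_contra hne
      rcases lt_or_gt_of_ne hne with hlt | hlt
      · exact hb.2 ⟨a, hlt, hab⟩
      · exact ha.2 ⟨b, hlt, hab.symm⟩
  have hPcard : n + 1 ≤ P.card + m := by
    have := Finset.card_filter_add_card_filter_not
      (s := Finset.range (n + 1)) (p := fun i => ∃ j, j < i ∧ r j = r i)
    rw [Finset.card_range, ← hP] at this
    omega
  -- previous-occurrence function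
  set prev : ℕ → ℕ := fun i => Nat.findGreatest (fun j => j < i ∧ r j = r i) i with hprevdef
  have hprev : ∀ i ∈ P, prev i < i ∧ r (prev i) = r i := by
    intro i hi
    rw [hP, Finset.mem_filter] at hi
    obtain ⟨j, hj, hrj⟩ := hi.2
    exact Nat.findGreatest_spec (P := fun j => j < i ∧ r j = r i) (by omega) ⟨hj, hrj⟩
  have hprevmax : ∀ i j, j < i → r j = r i → j ≤ prev i := fun i j hj hrj =>
    Nat.le_findGreatest (by omega) ⟨hj, hrj⟩
  -- i ∈ P and big gap ⟹ prev i is a first occurrence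
  have key : ∀ i ∈ P, F + 1 ≤ i - prev i → ∀ j, j < prev i → r j ≠ r i := by
    intro i hi hbig j hj hrj
    have hiP := hi
    rw [hP, Finset.mem_filter, Finset.mem_range] at hiP
    obtain ⟨hpi, hpr⟩ := hprev i hi
    have hrep : RepFactor x (i - prev i) :=
      surgeryC M hex h0 hacc hr hj hpi (by omega) (by rw [hrj, hpr]) hpr
    have := hFub _ hrep
    omega
  set Pbig := P.filter (fun i => ¬ (i - prev i ≤ F)) with hPbig
  set Psmall := P.filter (fun i => i - prev i ≤ F) with hPsmall
  have hsplit : Psmall.card + Pbig.card = P.card :=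
    Finset.card_filter_add_card_filter_not (p := fun i => i - prev i ≤ F)
  have hbigcard : Pbig.card ≤ m := by
    have := Finset.card_le_card_of_injOn (f := fun i => r i) (s := Pbig)
      (t := Finset.univ) (fun a _ => Finset.mem_univ _) ?_
    · simpa using this
    · intro a ha b hb hab
      simp only [Finset.mem_coe, hPbig, Finset.mem_filter] at ha hb
      by_contra hne
      have hmain : ∀ a b, a ∈ P → b ∈ P → ¬ (b - prev b ≤ F) → a < b → r a = r b → False := by
        intro a b haP hbP hbF hab hrab
        have h1 := hprev a haP
        have h2 : a ≤ prev b := hprevmax b a hab hrab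
        exact key b hbP (by omega) (prev a) (by omega) (by rw [h1.2, hrab])
      rcases lt_or_gt_of_ne hne with hlt | hlt
      · exact hmain a b ha.1 hb.1 hb.2 hlt hab
      · exact hmain b a hb.1 ha.1 ha.2 hlt hab.symm
  have hclass : ∀ dd : ℕ, 1 ≤ dd → (P.filter (fun i => i - prev i = dd)).card ≤ F + 1 := by
    intro dd hdd
    set cls := P.filter (fun i => i - prev i = dd) with hcls
    have hinj : Set.InjOn prev cls := by
      intro a ha b hb hab
      simp only [Finset.mem_coe, hcls, Finset.mem_filter] at ha hb
      have h1 := (hprev a ha.1).1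
      have h2 := (hprev b hb.1).1
      omega
    have hcards : cls.card = (cls.image prev).card := (Finset.card_image_of_injOn hinj).symm
    rcases Finset.eq_empty_or_nonempty cls with hemp | hne
    · simp [hemp]
    have hTne : (cls.image prev).Nonempty := hne.image prev
    set a0 := (cls.image prev).min' hTne with ha0
    have hsub : cls.image prev ⊆ Finset.Icc a0 (a0 + F) := by
      intro b hb
      rw [Finset.mem_Icc]
      refine ⟨Finset.min'_le _ _ hb, ?_⟩
      obtain ⟨ib, hib, hibp⟩ := Finset.mem_image.1 hb
      obtain ⟨ia, hia, hiap⟩ := Finset.mem_image.1 ((cls.image prev).min'_mem hTne)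
      simp only [hcls, Finset.mem_filter] at hia hib
      have hia2 := hprev ia hia.1
      have hib2 := hprev ib hib.1
      have hian : ia < n + 1 := by
        have := hia.1; rw [hP, Finset.mem_filter, Finset.mem_range] at this; exact this.1
      have hibn : ib < n + 1 := by
        have := hib.1; rw [hP, Finset.mem_filter, Finset.mem_range] at this; exact this.1
      rcases Nat.lt_trichotomy a0 b with hc | hc | hc
      · -- mechanism B with p := a0, q := b, d := dd
        have hrep : RepFactor x (b - a0) := by
          refine surgeryB M hex h0 hacc hr hc hdd ?_ ?_ ?_
          · rw [← hibp]; omega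
          · rw [ha0, ← hiap]
            rw [show prev ia + dd = ia by omega]
            exact hia2.2
          · rw [← hibp]
            rw [show prev ib + dd = ib by omega]
            exact hib2.2
        have := hFub _ hrep
        omega
      · omega
      · -- impossible: a0 is minimal
        have := Finset.min'_le _ _ hb
        omega
    have := Finset.card_le_card hsub
    rw [← hcards] at this
    rwa [Nat.card_Icc, show a0 + F + 1 - a0 = F + 1 by omega] at this
  have hsmallcard : Psmall.card ≤ F * (F + 1) := by
    have hsub : Psmall ⊆ (Finset.Icc 1 F).biUnion
        (fun dd => P.filter (fun i => i - prev i = dd)) := by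
      intro i hi
      simp only [hPsmall, Finset.mem_filter] at hi
      rw [Finset.mem_biUnion]
      have h1 := (hprev i hi.1).1
      exact ⟨i - prev i, Finset.mem_Icc.2 (by omega), Finset.mem_filter.2 ⟨hi.1, rfl⟩⟩
    calc Psmall.card ≤ _ := Finset.card_le_card hsub
    _ ≤ ∑ dd ∈ Finset.Icc 1 F, (P.filter (fun i => i - prev i = dd)).card :=
        Finset.card_biUnion_le
    _ ≤ ∑ _dd ∈ Finset.Icc 1 F, (F + 1) :=
        Finset.sum_le_sum (fun dd hdd => hclass dd (Finset.mem_Icc.1 hdd).1)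
    _ = F * (F + 1) := by
        rw [Finset.sum_const, Nat.card_Icc, smul_eq_mul, Nat.add_sub_cancel]
  omega

section Trivial

variable (x : List α)

/-- the path NFA accepting exactly `x` -/
def pathNFA : NFA α (Fin (x.length + 1)) where
  step s a := {t | (t : ℕ) = (s : ℕ) + 1 ∧ x[(s : ℕ)]? = some a}
  start := {s | (s : ℕ) = 0}
  accept := {s | (s : ℕ) = x.length}

lemma evalFrom_empty {σ : Type} (M : NFA α σ) (l : List α) : M.evalFrom ∅ l = ∅ := by
  induction l with
  | nil => rfl
  | cons a l IH =>
    have : M.evalFrom ∅ (a :: l) = M.evalFrom (M.stepSet ∅ a) l := rfl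
    rwa [this, NFA.stepSet_empty]

lemma pathNFA_eval (y : List α) : ∀ (i j : Fin (x.length + 1)),
    (j ∈ (pathNFA x).evalFrom {i} y ↔
      ((j : ℕ) = (i : ℕ) + y.length ∧ (i : ℕ) + y.length ≤ x.length ∧
        (x.drop (i : ℕ)).take y.length = y)) := by
  induction y with
  | nil =>
    intro i j
    simp only [NFA.evalFrom_nil, Set.mem_singleton_iff, List.length_nil, List.take_zero,
      Nat.add_zero]
    constructor
    · rintro rfl
      exact ⟨rfl, by omega, trivial⟩
    · rintro ⟨h1, -, -⟩
      exact Fin.ext h1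
  | cons a y IH =>
    intro i j
    have hstep : (pathNFA x).evalFrom {i} (a :: y) =
        (pathNFA x).evalFrom ((pathNFA x).stepSet {i} a) y := rfl
    have hss : (pathNFA x).stepSet {i} a = (pathNFA x).step i a := by
      simp [NFA.stepSet]
    rw [hstep, hss]
    by_cases hx : x[(i : ℕ)]? = some a
    · have hlt : (i : ℕ) < x.length := by
        by_contra hc
        rw [List.getElem?_eq_none (by omega)] at hx
        cases hx
      have hxi : x[(i : ℕ)]'hlt = a := by
        rw [List.getElem?_eq_getElem hlt] at hx
        exact Option.some.inj hx
      have hsingle : (pathNFA x).step i a = {(⟨(i : ℕ) + 1, by omega⟩ : Fin (x.length + 1))} := by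
        ext t
        simp only [pathNFA, Set.mem_setOf_eq, Set.mem_singleton_iff, Fin.ext_iff]
        constructor
        · rintro ⟨h1, -⟩; exact h1
        · rintro h1; exact ⟨h1, hx⟩
      rw [hsingle, IH]
      have hdrop : x.drop (i : ℕ) = x[(i : ℕ)] :: x.drop ((i : ℕ) + 1) :=
        List.drop_eq_getElem_cons hlt
      simp only [List.length_cons, Fin.val_mk]
      constructor
      · rintro ⟨h1, h2, h3⟩
        refine ⟨by omega, by omega, ?_⟩
        rw [hdrop, List.take_succ_cons, h3, hxi]
      · rintro ⟨h1, h2, h3⟩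
        rw [hdrop, List.take_succ_cons, hxi] at h3
        refine ⟨by omega, by omega, ?_⟩
        exact (List.cons.injEq _ _ _ _ ▸ h3).2
    · have hempty : (pathNFA x).step i a = ∅ := by
        ext t
        simp only [pathNFA, Set.mem_setOf_eq, Set.mem_empty_iff_false, iff_false, not_and]
        intro _
        exact hx
      rw [hempty, evalFrom_empty]
      simp only [Set.mem_empty_iff_false, false_iff, not_and, List.length_cons]
      intro h1 h2 h3
      have hlt : (i : ℕ) < x.length := by omega
      have hdrop : x.drop (i : ℕ) = x[(i : ℕ)] :: x.drop ((i : ℕ) + 1) :=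
        List.drop_eq_getElem_cons hlt
      rw [hdrop, List.take_succ_cons] at h3
      have : x[(i : ℕ)] = a := (List.cons.injEq _ _ _ _ ▸ h3).1
      rw [← this] at hx
      exact hx (List.getElem?_eq_getElem hlt)

lemma pathNFA_exact : ExactAccepts (pathNFA x) x := by
  have h0 : ((⟨0, by omega⟩ : Fin (x.length + 1)) : ℕ) = 0 := rfl
  have hset : (pathNFA x).start = {(⟨0, by omega⟩ : Fin (x.length + 1))} := by
    ext t; simp only [pathNFA, Set.mem_setOf_eq, Set.mem_singleton_iff, Fin.ext_iff, Fin.val_mk]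
  constructor
  · refine ⟨⟨x.length, by omega⟩, ?_, ?_⟩
    · simp [pathNFA]
    · show _ ∈ (pathNFA x).evalFrom (pathNFA x).start x
      rw [hset, pathNFA_eval]
      simp
  · intro y hlen hy
    obtain ⟨s, hs, hev⟩ := hy
    have hev' : s ∈ (pathNFA x).evalFrom (pathNFA x).start y := hev
    rw [hset, pathNFA_eval] at hev'
    replace hev := hev'
    obtain ⟨-, -, h3⟩ := hev
    rw [h0] at h3
    rw [List.drop_zero, hlen, List.take_length] at h3
    exact h3.symm

end Trivial



/-- base-`k` value of a digit string (big-endian) -/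
def valF (k : ℕ) (l : List (Fin k)) : ℕ := l.foldl (fun acc a => acc * k + a.val) 0

/-- `w`-digit base-`k` encoding of `v` (big-endian) -/
def enc (k : ℕ) (hk : 0 < k) : ℕ → ℕ → List (Fin k)
  | 0, _ => []
  | w + 1, v => enc k hk w (v / k) ++ [⟨v % k, Nat.mod_lt _ hk⟩]

lemma enc_length (k : ℕ) (hk : 0 < k) (w v : ℕ) : (enc k hk w v).length = w := by
  induction w generalizing v with
  | zero => rfl
  | succ w IH => simp [enc, IH]

lemma valF_append (k : ℕ) (l : List (Fin k)) (a : Fin k) :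
    valF k (l ++ [a]) = (valF k l) * k + a.val := by
  unfold valF
  rw [List.foldl_append]
  rfl

lemma valF_enc (k : ℕ) (hk : 0 < k) (w v : ℕ) (hv : v < k ^ w) :
    valF k (enc k hk w v) = v := by
  induction w generalizing v with
  | zero =>
    have : v = 0 := by simpa using hv
    simp [this, enc, valF]
  | succ w IH =>
    rw [enc, valF_append, IH (v / k) (by
      rw [Nat.div_lt_iff_lt_mul hk]
      calc v < k ^ (w + 1) := hv
      _ = k ^ w * k := by ring)]
    show v / k * k + v % k = v
    rw [Nat.mul_comm (v / k) k]
    exact Nat.div_add_mod v k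

/-- step function of the unary-prefix counter -/
def cntstep (k : ℕ) (d0 : Fin k) : (ℕ × Bool) → Fin k → (ℕ × Bool) := fun s a =>
  if s.2 = false ∧ a = d0 then (s.1 + 1, false) else (s.1, true)

def cnt (k : ℕ) (d0 : Fin k) (p : List (Fin k)) : ℕ :=
  (p.foldl (cntstep k d0) (0, false)).1

lemma cnt_stopped (k : ℕ) (d0 : Fin k) (l : List (Fin k)) (c : ℕ) :
    l.foldl (cntstep k d0) (c, true) = (c, true) := by
  induction l with
  | nil => rfl
  | cons a l IH => simpa [cntstep] using IH

lemma cnt_replicate (k : ℕ) (d0 : Fin k) (w c : ℕ) (l : List (Fin k)) :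
    (List.replicate w d0 ++ l).foldl (cntstep k d0) (c, false)
      = l.foldl (cntstep k d0) (c + w, false) := by
  induction w generalizing c with
  | zero => simp
  | succ w IH =>
    rw [List.replicate_succ, List.cons_append, List.foldl_cons]
    have h1 : cntstep k d0 (c, false) d0 = (c + 1, false) := by simp [cntstep]
    rw [h1, IH]
    congr 2
    omega

lemma cnt_spec (k : ℕ) (d0 d1 : Fin k) (hne : d1 ≠ d0) (w : ℕ) (l : List (Fin k)) :
    cnt k d0 (List.replicate w d0 ++ d1 :: l) = w := by
  unfold cnt
  rw [cnt_replicate, List.foldl_cons]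
  have h1 : cntstep k d0 (0 + w, false) d1 = (w, true) := by simp [cntstep, hne]
  rw [h1, cnt_stopped]

/-- digit-field extractor -/
def fld (k : ℕ) (d0 : Fin k) (p : List (Fin k)) (off w : ℕ) : ℕ :=
  (List.range w).foldl (fun acc t => acc * k + (p.getD (off + t) d0).val) 0

lemma fld_succ (k : ℕ) (d0 : Fin k) (p : List (Fin k)) (off w : ℕ) :
    fld k d0 p off (w + 1) = (fld k d0 p off w) * k + (p.getD (off + w) d0).val := by
  unfold fld
  rw [List.range_succ, List.foldl_append]
  rfl

lemma fld_congr (k : ℕ) (d0 : Fin k) (p p' : List (Fin k)) (off off' : ℕ) (w : ℕ)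
    (h : ∀ t, t < w → p.getD (off + t) d0 = p'.getD (off' + t) d0) :
    fld k d0 p off w = fld k d0 p' off' w := by
  induction w with
  | zero => rfl
  | succ w IH =>
    rw [fld_succ, fld_succ, IH (fun t ht => h t (by omega)), h w (by omega)]

lemma fld_spec (k : ℕ) (d0 : Fin k) (l p : List (Fin k)) (off : ℕ)
    (hsl : ∀ t, t < l.length → p.getD (off + t) d0 = l.getD t d0) :
    fld k d0 p off l.length = valF k l := by
  induction l using List.reverseRecOn generalizing off with
  | nil => rfl
  | append_singleton l a IH =>
    rw [List.length_append, List.length_singleton, fld_succ, valF_append]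
    have h1 : fld k d0 p off l.length = valF k l := by
      apply IH
      intro t ht
      rw [hsl t (by simp; omega)]
      rw [List.getD_eq_getElem?_getD, List.getD_eq_getElem?_getD, List.getElem?_append]
      simp [ht]
    rw [h1]
    congr 1
    rw [hsl l.length (by simp)]
    rw [List.getD_eq_getElem?_getD, List.getElem?_append]
    simp

lemma getD_drop {α : Type} (l : List α) (m t : ℕ) (d : α) :
    (l.drop m).getD t d = l.getD (m + t) d := by
  rw [List.getD_eq_getElem?_getD, List.getD_eq_getElem?_getD, List.getElem?_drop]

lemma getD_append_left {α : Type} (l1 l2 : List α) (t : ℕ) (d : α) (h : t < l1.length) :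
    (l1 ++ l2).getD t d = l1.getD t d := by
  rw [List.getD_eq_getElem?_getD, List.getD_eq_getElem?_getD, List.getElem?_append_left h]

lemma getD_append_right {α : Type} (l1 l2 : List α) (t : ℕ) (d : α) :
    (l1 ++ l2).getD (l1.length + t) d = l2.getD t d := by
  rw [← getD_drop (l1 ++ l2) l1.length t d, List.drop_left]

/-- the decoder, explicit form -/
def deco0 (k : ℕ) (d0 : Fin k) (p : List (Fin k)) (w i j ℓ : ℕ) : List (Fin k) :=
  ((List.range (min j (p.length - (4 * w + 1)))).map fun t => p.getD (4 * w + 1 + t) d0)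
    ++ (((List.range ℓ).map fun t => p.getD (4 * w + 1 + (i + t % (j - i))) d0)
    ++ ((List.range ((p.length - (4 * w + 1)) - j)).map fun t => p.getD (4 * w + 1 + (j + t)) d0))

/-- the decoder -/
def deco (k : ℕ) (d0 : Fin k) (p : List (Fin k)) : List (Fin k) :=
  deco0 k d0 p (cnt k d0 p) (fld k d0 p (cnt k d0 p + 1) (cnt k d0 p))
    (fld k d0 p (2 * cnt k d0 p + 1) (cnt k d0 p))
    (fld k d0 p (3 * cnt k d0 p + 1) (cnt k d0 p))

/-- the program for `x` with repeated factor `(i,j,ℓ)` -/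
def prog (k : ℕ) (hk0 : 0 < k) (d0 d1 : Fin k) (w i j ℓ : ℕ) (x : List (Fin k)) :
    List (Fin k) :=
  (List.replicate w d0 ++ [d1]) ++ (enc k hk0 w i ++ (enc k hk0 w j ++ (enc k hk0 w ℓ ++
    (x.take j ++ x.drop (j + ℓ)))))

lemma prog_length (k : ℕ) (hk0 : 0 < k) (d0 d1 : Fin k) (w i j ℓ : ℕ) (x : List (Fin k))
    (hjl : j + ℓ ≤ x.length) :
    (prog k hk0 d0 d1 w i j ℓ x).length = 4 * w + 1 + (x.length - ℓ) := by
  unfold prog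
  simp [enc_length]
  omega

lemma deco_correct (k : ℕ) (hk0 : 0 < k) (d0 d1 : Fin k) (hne : d1 ≠ d0)
    (x : List (Fin k)) {i j ℓ : ℕ} (hij : i < j) (hjl : j + ℓ ≤ x.length)
    (hfac : (x.drop i).take ℓ = (x.drop j).take ℓ)
    (w : ℕ) (hwi : i < k ^ w) (hwj : j < k ^ w) (hwl : ℓ < k ^ w) :
    deco k d0 (prog k hk0 d0 d1 w i j ℓ x) = x := by
  set n := x.length with hn
  set y := x.take j ++ x.drop (j + ℓ) with hy
  have hylen : y.length = n - ℓ := by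
    rw [hy]; simp; omega
  set e1 := enc k hk0 w i with he1
  set e2 := enc k hk0 w j with he2
  set e3 := enc k hk0 w ℓ with he3
  set P := prog k hk0 d0 d1 w i j ℓ x with hP
  have hPform : P = (List.replicate w d0 ++ [d1]) ++ (e1 ++ (e2 ++ (e3 ++ y))) := rfl
  have hPlen : P.length = 4 * w + 1 + y.length := by
    rw [hP, prog_length k hk0 d0 d1 w i j ℓ x hjl, hylen]
  -- successive drops
  have hd1 : P.drop (w + 1) = e1 ++ (e2 ++ (e3 ++ y)) := by
    rw [hPform, show w + 1 = (List.replicate w d0 ++ [d1]).length by simp, List.drop_left]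
  have hd2 : P.drop (2 * w + 1) = e2 ++ (e3 ++ y) := by
    have : P.drop (2 * w + 1) = (P.drop (w + 1)).drop w := by
      rw [List.drop_drop]
      congr 1
      omega
    rw [this, hd1, show w = e1.length by rw [he1, enc_length], List.drop_left]
  have hd3 : P.drop (3 * w + 1) = e3 ++ y := by
    have : P.drop (3 * w + 1) = (P.drop (2 * w + 1)).drop w := by
      rw [List.drop_drop]
      congr 1
      omega
    rw [this, hd2, show w = e2.length by rw [he2, enc_length], List.drop_left]
  have hd4 : P.drop (4 * w + 1) = y := by
    have : P.drop (4 * w + 1) = (P.drop (3 * w + 1)).drop w := by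
      rw [List.drop_drop]
      congr 1
      omega
    rw [this, hd3, show w = e3.length by rw [he3, enc_length], List.drop_left]
  -- unary prefix
  have hw : cnt k d0 P = w := by
    rw [hPform, List.append_assoc, List.singleton_append]
    exact cnt_spec k d0 d1 hne w _
  -- fields
  have hfi : fld k d0 P (w + 1) w = i := by
    have h0 : ∀ t, t < e1.length → P.getD (w + 1 + t) d0 = e1.getD t d0 := by
      intro t ht
      rw [← getD_drop P (w + 1) t d0, hd1, getD_append_left _ _ _ _ ht]
    have h1 : fld k d0 P (w + 1) e1.length = valF k e1 := fld_spec k d0 e1 P (w + 1) h0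
    rw [he1, enc_length] at h1
    rw [h1]; exact valF_enc k hk0 w i hwi
  have hfj : fld k d0 P (2 * w + 1) w = j := by
    have h0 : ∀ t, t < e2.length → P.getD (2 * w + 1 + t) d0 = e2.getD t d0 := by
      intro t ht
      rw [← getD_drop P (2 * w + 1) t d0, hd2, getD_append_left _ _ _ _ ht]
    have h1 : fld k d0 P (2 * w + 1) e2.length = valF k e2 := fld_spec k d0 e2 P (2 * w + 1) h0
    rw [he2, enc_length] at h1
    rw [h1]; exact valF_enc k hk0 w j hwj
  have hfl : fld k d0 P (3 * w + 1) w = ℓ := by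
    have h0 : ∀ t, t < e3.length → P.getD (3 * w + 1 + t) d0 = e3.getD t d0 := by
      intro t ht
      rw [← getD_drop P (3 * w + 1) t d0, hd3, getD_append_left _ _ _ _ ht]
    have h1 : fld k d0 P (3 * w + 1) e3.length = valF k e3 := fld_spec k d0 e3 P (3 * w + 1) h0
    rw [he3, enc_length] at h1
    rw [h1]; exact valF_enc k hk0 w ℓ hwl
  -- getD facts
  have hPgetD : ∀ t : ℕ, P.getD (4 * w + 1 + t) d0 = y.getD t d0 := by
    intro t
    rw [← getD_drop P (4 * w + 1) t d0, hd4]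
  have hxtake : (x.take j).length = j := by simp; omega
  have hygetD1 : ∀ t, t < j → y.getD t d0 = x.getD t d0 := by
    intro t ht
    rw [hy, getD_append_left _ _ _ _ (by rw [hxtake]; exact ht)]
    rw [List.getD_eq_getElem x d0 (by omega), List.getD_eq_getElem _ d0 (by rw [hxtake]; exact ht)]
    exact List.getElem_take
  have hygetD2 : ∀ t : ℕ, y.getD (j + t) d0 = x.getD (j + ℓ + t) d0 := by
    intro t
    rw [hy, show j + t = (x.take j).length + t by rw [hxtake], getD_append_right,
      getD_drop]
  -- assembly
  show deco0 k d0 P (cnt k d0 P) _ _ _ = x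
  rw [hw, hfi, hfj, hfl]
  have hyl : P.length - (4 * w + 1) = y.length := by omega
  rw [deco0, hyl]
  have hminj : min j y.length = j := by omega
  rw [hminj]
  have hA : ((List.range j).map fun t => P.getD (4 * w + 1 + t) d0) = x.take j := by
    apply List.ext_getElem
    · simp; omega
    · intro t h1 h2
      simp only [List.getElem_map, List.getElem_range]
      rw [hPgetD, hygetD1 t (by simpa using h1), List.getD_eq_getElem x d0 (by omega)]
      rw [List.getElem_take]
  have hB : ((List.range ℓ).map fun t => P.getD (4 * w + 1 + (i + t % (j - i))) d0)
      = (x.drop j).take ℓ := by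
    apply List.ext_getElem
    · simp; omega
    · intro t h1 h2
      simp only [List.getElem_map, List.getElem_range]
      have ht : t < ℓ := by simpa using h1
      have hmod : i + t % (j - i) < j := by
        have := Nat.mod_lt t (show 0 < j - i by omega)
        omega
      rw [hPgetD, hygetD1 _ hmod, ← rep_period d0 hfac hjl hij t ht]
      rw [List.getD_eq_getElem x d0 (by omega)]
      rw [List.getElem_take, List.getElem_drop]
  have hC : ((List.range (y.length - j)).map fun t => P.getD (4 * w + 1 + (j + t)) d0)
      = x.drop (j + ℓ) := by
    apply List.ext_getElem
    · simp; omega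
    · intro t h1 h2
      simp only [List.getElem_map, List.getElem_range]
      have ht : t < y.length - j := by simpa using h1
      rw [hPgetD, hygetD2 t, List.getD_eq_getElem x d0 (by omega)]
      rw [List.getElem_drop]
  rw [hA, hB, hC]
  have hdd : (x.drop j).drop ℓ = x.drop (j + ℓ) := by
    rw [List.drop_drop]
    try congr 1
    try omega
  rw [← hdd, List.take_append_drop, List.take_append_drop]


section Computability

open Primrec

lemma cnt_primrec (k : ℕ) (d0 : Fin k) : Primrec (cnt k d0) := by
  have hstep : Primrec₂ (fun (_ : List (Fin k)) (s : (ℕ × Bool) × Fin k) =>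
      cntstep k d0 s.1 s.2) := by
    unfold cntstep
    refine Primrec.ite ?_ ?_ ?_
    · exact (PrimrecRel.comp Primrec.eq (snd.comp (fst.comp snd)) (const false)).and
        (PrimrecRel.comp Primrec.eq (snd.comp snd) (const d0))
    · exact Primrec.pair (succ.comp (fst.comp (fst.comp snd))) (const false)
    · exact Primrec.pair (fst.comp (fst.comp snd)) (const true)
  have h := Primrec.fst.comp
    (Primrec.list_foldl (Primrec.id) (const ((0, false) : ℕ × Bool)) hstep)
  exact h.of_eq fun p => rfl

lemma fld_primrec (k : ℕ) (d0 : Fin k) :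
    Primrec (fun a : List (Fin k) × (ℕ × ℕ) => fld k d0 a.1 a.2.1 a.2.2) := by
  have hh : Primrec₂ (fun (a : List (Fin k) × (ℕ × ℕ)) (s : ℕ × ℕ) =>
      s.1 * k + (a.1.getD (a.2.1 + s.2) d0).val) := by
    refine Primrec₂.comp Primrec.nat_add ?_ ?_
    · exact Primrec₂.comp Primrec.nat_mul (fst.comp snd) (const k)
    · exact Primrec.fin_val.comp (Primrec₂.comp
        (f := fun (l : List (Fin k)) (n : ℕ) => l.getD n d0)
        (Primrec.list_getD d0) (fst.comp fst)
        (Primrec₂.comp Primrec.nat_add (fst.comp (snd.comp fst)) (snd.comp snd)))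
  have h := Primrec.list_foldl (Primrec.list_range.comp (snd.comp snd))
    (const (0 : ℕ)) hh
  exact h.of_eq fun a => rfl

lemma deco_primrec (k : ℕ) (d0 : Fin k) : Primrec (deco k d0) := by
  have hw : Primrec (fun p : List (Fin k) => cnt k d0 p) := cnt_primrec k d0
  have hfld := fld_primrec k d0
  have hfi : Primrec (fun p : List (Fin k) => fld k d0 p (cnt k d0 p + 1) (cnt k d0 p)) :=
    hfld.comp (Primrec.pair Primrec.id (Primrec.pair (succ.comp hw) hw))
  have hfj : Primrec (fun p : List (Fin k) =>
      fld k d0 p (2 * cnt k d0 p + 1) (cnt k d0 p)) :=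
    hfld.comp (Primrec.pair Primrec.id (Primrec.pair
      (succ.comp (Primrec₂.comp Primrec.nat_mul (const 2) hw)) hw))
  have hfl : Primrec (fun p : List (Fin k) =>
      fld k d0 p (3 * cnt k d0 p + 1) (cnt k d0 p)) :=
    hfld.comp (Primrec.pair Primrec.id (Primrec.pair
      (succ.comp (Primrec₂.comp Primrec.nat_mul (const 3) hw)) hw))
  -- context: (((p, w), (i, j)), l)
  have hbase : Primrec (fun p : List (Fin k) =>
      ((p, cnt k d0 p), (fld k d0 p (cnt k d0 p + 1) (cnt k d0 p),
        fld k d0 p (2 * cnt k d0 p + 1) (cnt k d0 p)),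
        fld k d0 p (3 * cnt k d0 p + 1) (cnt k d0 p))) :=
    Primrec.pair (Primrec.pair Primrec.id hw) (Primrec.pair (Primrec.pair hfi hfj) hfl)
  set Ctx := (List (Fin k) × ℕ) × (ℕ × ℕ) × ℕ
  have cp : Primrec (fun z : Ctx => z.1.1) := fst.comp fst
  have cw : Primrec (fun z : Ctx => z.1.2) := snd.comp fst
  have ci : Primrec (fun z : Ctx => z.2.1.1) := fst.comp (fst.comp snd)
  have cj : Primrec (fun z : Ctx => z.2.1.2) := snd.comp (fst.comp snd)
  have cl : Primrec (fun z : Ctx => z.2.2) := snd.comp snd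
  have cbase : Primrec (fun z : Ctx => 4 * z.1.2 + 1) :=
    succ.comp (Primrec₂.comp Primrec.nat_mul (const 4) cw)
  have cyl : Primrec (fun z : Ctx => z.1.1.length - (4 * z.1.2 + 1)) :=
    Primrec₂.comp Primrec.nat_sub (Primrec.list_length.comp cp) cbase
  have hA : Primrec (fun z : Ctx => (List.range (min z.2.1.2
      (z.1.1.length - (4 * z.1.2 + 1)))).map
      (fun t => z.1.1.getD (4 * z.1.2 + 1 + t) d0)) := by
    refine Primrec.list_map (Primrec.list_range.comp
      (Primrec₂.comp Primrec.nat_min cj cyl)) ?_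
    exact Primrec₂.comp (f := fun (l : List (Fin k)) (n : ℕ) => l.getD n d0)
      (Primrec.list_getD d0) (cp.comp fst)
      (Primrec₂.comp Primrec.nat_add (cbase.comp fst) snd)
  have hB : Primrec (fun z : Ctx => (List.range z.2.2).map
      (fun t => z.1.1.getD (4 * z.1.2 + 1 + (z.2.1.1 + t % (z.2.1.2 - z.2.1.1))) d0)) := by
    refine Primrec.list_map (Primrec.list_range.comp cl) ?_
    refine Primrec₂.comp (f := fun (l : List (Fin k)) (n : ℕ) => l.getD n d0)
      (Primrec.list_getD d0) (cp.comp fst) ?_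
    refine Primrec₂.comp Primrec.nat_add (cbase.comp fst) ?_
    refine Primrec₂.comp Primrec.nat_add (ci.comp fst) ?_
    exact Primrec₂.comp Primrec.nat_mod snd
      ((Primrec₂.comp Primrec.nat_sub cj ci).comp fst)
  have hC : Primrec (fun z : Ctx => (List.range
      ((z.1.1.length - (4 * z.1.2 + 1)) - z.2.1.2)).map
      (fun t => z.1.1.getD (4 * z.1.2 + 1 + (z.2.1.2 + t)) d0)) := by
    refine Primrec.list_map (Primrec.list_range.comp
      (Primrec₂.comp Primrec.nat_sub cyl cj)) ?_
    refine Primrec₂.comp (f := fun (l : List (Fin k)) (n : ℕ) => l.getD n d0)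
      (Primrec.list_getD d0) (cp.comp fst) ?_
    refine Primrec₂.comp Primrec.nat_add (cbase.comp fst) ?_
    exact Primrec₂.comp Primrec.nat_add (cj.comp fst) snd
  have hout : Primrec (fun z : Ctx => ((List.range (min z.2.1.2
      (z.1.1.length - (4 * z.1.2 + 1)))).map (fun t => z.1.1.getD (4 * z.1.2 + 1 + t) d0))
      ++ (((List.range z.2.2).map
      (fun t => z.1.1.getD (4 * z.1.2 + 1 + (z.2.1.1 + t % (z.2.1.2 - z.2.1.1))) d0))
      ++ ((List.range ((z.1.1.length - (4 * z.1.2 + 1)) - z.2.1.2)).map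
      (fun t => z.1.1.getD (4 * z.1.2 + 1 + (z.2.1.2 + t)) d0)))) :=
    Primrec₂.comp Primrec.list_append hA (Primrec₂.comp Primrec.list_append hB hC)
  exact (hout.comp hbase).of_eq fun p => rfl

lemma deco_computable (k : ℕ) (d0 : Fin k) : Computable (deco k d0) :=
  (deco_primrec k d0).to_comp

end Computability

end KH


theorem kolmogorov_bound (k : ℕ) (hk : 2 ≤ k) (q : ℝ) (hq0 : 0 < q) (hq : q < 1/2)
    (U : List (Fin k) →. List (Fin k))
    (hU : ∀ f : List (Fin k) →. List (Fin k), Partrec f →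
      ∃ c : ℕ, ∀ (p : List (Fin k)) (x : List (Fin k)), x ∈ f p →
        ∃ p' : List (Fin k), x ∈ U p' ∧ p'.length ≤ p.length + c) :
    ∃ C : ℝ, ∀ n : ℕ, 4 ≤ n → ∀ x : List (Fin k), x.length = n →
      (ANe x : ℝ) < q * n →
      (KC U x : ℝ) ≤ n - ((1 - 2 * q) / 2) * Real.sqrt n + 5 * Real.logb k n + C := by
  classical
  have hk0 : 0 < k := by omega
  have hk1 : 1 < k := by omega
  set d0 : Fin k := ⟨0, by omega⟩ with hd0
  set d1 : Fin k := ⟨1, by omega⟩ with hd1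
  have hne : d1 ≠ d0 := by
    simp [hd0, hd1, Fin.ext_iff]
  obtain ⟨c, hc⟩ := hU (↑(KH.deco k d0)) (KH.deco_computable k d0).partrec
  refine ⟨(c : ℝ) + 6, ?_⟩
  intro n hn4 x hxlen hANe
  have hnonempty : {m : ℕ | ∃ M : NFA (Fin k) (Fin m), ExactAccepts M x}.Nonempty :=
    ⟨x.length + 1, KH.pathNFA x, KH.pathNFA_exact x⟩
  set m := ANe x with hm
  have hmem : ∃ M : NFA (Fin k) (Fin m), ExactAccepts M x := Nat.sInf_mem hnonempty
  obtain ⟨M, hex⟩ := hmem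
  set F := sSup {ℓ | KH.RepFactor x ℓ} with hF
  have hcount : x.length + 1 ≤ F * (F + 1) + 2 * m := KH.main_count M hex (by omega)
  have hFS : KH.RepFactor x F := by
    rw [hF]
    have h1 : (0 : ℕ) ∈ {ℓ : ℕ | KH.RepFactor x ℓ} := KH.rep_of_zero (by omega)
    have h2 : BddAbove {ℓ : ℕ | KH.RepFactor x ℓ} :=
      ⟨x.length, fun y hy => KH.rep_le hy⟩
    exact Nat.sSup_mem (s := {ℓ : ℕ | KH.RepFactor x ℓ}) ⟨0, h1⟩ h2
  obtain ⟨i, j, hij, hjl, hfac⟩ := hFS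
  have hFn : F ≤ n := by omega
  set w := Nat.log k n + 1 with hw
  have hnw : n < k ^ w := Nat.lt_pow_succ_log_self hk1 n
  have hdeco : KH.deco k d0 (KH.prog k hk0 d0 d1 w i j F x) = x :=
    KH.deco_correct k hk0 d0 d1 hne x hij hjl hfac w (by omega) (by omega) (by omega)
  obtain ⟨p', hp'U, hp'len⟩ := hc (KH.prog k hk0 d0 d1 w i j F x) x (by
    show x ∈ Part.some (KH.deco k d0 (KH.prog k hk0 d0 d1 w i j F x))
    exact Part.mem_some_iff.2 hdeco.symm)
  have hKC : KC U x ≤ p'.length := Nat.sInf_le ⟨p', hp'U, rfl⟩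
  have hPlen : (KH.prog k hk0 d0 d1 w i j F x).length = 4 * w + 1 + (n - F) := by
    rw [KH.prog_length k hk0 d0 d1 w i j F x hjl, hxlen]
  have hnat : KC U x ≤ 4 * w + 1 + (n - F) + c := by omega
  have h1 : (KC U x : ℝ) ≤ 4 * (w : ℝ) + 1 + ((n : ℝ) - F) + c := by
    have h := (Nat.cast_le (α := ℝ)).2 hnat
    have e : ((4 * w + 1 + (n - F) + c : ℕ) : ℝ) = 4 * (w : ℝ) + 1 + ((n : ℝ) - F) + c := by
      push_cast [Nat.cast_sub hFn]
      ring
    rwa [e] at h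
  -- square-root estimate
  have hq2 : (0 : ℝ) ≤ 1 - 2 * q := by linarith
  have hF0 : (0 : ℝ) ≤ (F : ℝ) := Nat.cast_nonneg F
  have hc2 : (n : ℝ) + 1 ≤ (F : ℝ) * ((F : ℝ) + 1) + 2 * m := by
    rw [← hxlen]
    exact_mod_cast hcount
  have hF2 : (1 - 2 * q) * n ≤ ((F : ℝ) + 1) ^ 2 := by nlinarith [hANe]
  have hsq : Real.sqrt ((1 - 2 * q) * n) ≤ (F : ℝ) + 1 := by
    rw [show ((F : ℝ) + 1) = Real.sqrt (((F : ℝ) + 1) ^ 2) from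
      (Real.sqrt_sq (by positivity)).symm]
    exact Real.sqrt_le_sqrt hF2
  have haq : ((1 - 2 * q) / 2) * Real.sqrt n ≤ Real.sqrt ((1 - 2 * q) * n) := by
    rw [Real.sqrt_mul hq2]
    have h1q : (1 - 2 * q) / 2 ≤ Real.sqrt (1 - 2 * q) := by
      have h2 : (1 - 2 * q) ^ 2 ≤ 1 - 2 * q := by nlinarith
      have h3 : (1 - 2 * q) ≤ Real.sqrt (1 - 2 * q) := by
        nth_rewrite 1 [show (1 - 2 * q : ℝ) = Real.sqrt ((1 - 2 * q) ^ 2) from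
          (Real.sqrt_sq hq2).symm]
        exact Real.sqrt_le_sqrt h2
      linarith
    exact mul_le_mul_of_nonneg_right h1q (Real.sqrt_nonneg n)
  have hfinsqrt : ((1 - 2 * q) / 2) * Real.sqrt n ≤ (F : ℝ) + 1 := le_trans haq hsq
  -- log estimate
  have hkR : (1 : ℝ) < (k : ℝ) := by exact_mod_cast hk1
  have hlog0 : 0 ≤ Real.logb k n :=
    Real.logb_nonneg hkR (by exact_mod_cast Nat.one_le_iff_ne_zero.2 (show n ≠ 0 by omega))
  have hwlog : (w : ℝ) ≤ Real.logb k n + 1 := by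
    have hp : ((k : ℝ)) ^ (Nat.log k n) ≤ (n : ℝ) := by
      exact_mod_cast Nat.pow_log_le_self k (show n ≠ 0 by omega)
    have h2 : (Nat.log k n : ℝ) ≤ Real.logb k n := by
      have h3 : Real.logb k ((k : ℝ) ^ (Nat.log k n)) ≤ Real.logb k n :=
        Real.logb_le_logb_of_le hkR (by positivity) hp
      rwa [Real.logb_pow, Real.logb_self_eq_one hkR, mul_one] at h3
    rw [hw]
    push_cast
    linarith
  calc (KC U x : ℝ) ≤ 4 * w + 1 + ((n : ℝ) - F) + c := h1
  _ ≤ (n : ℝ) - ((1 - 2 * q) / 2) * Real.sqrt n + 5 * Real.logb k n + ((c : ℝ) + 6) := by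
      linarith
end

section
/- Let u, v be words of the same length n with uv ≠ vu. Then neither uv nor vu is a factor of u^3, and neither is a factor of v^3. -/
namespace List

variable {α : Type*}

/-- Writing `u ++ u ++ u = a ++ w ++ b` and cutting `u` after its first `a.length` letters
exhibits `w` as the square of the rotation `u.drop a.length ++ u.take a.length`. -/
theorem exists_eq_append_self_of_infix_cube {u w : List α} (hw : w.length = 2 * u.length)
    (hinf : w <:+: u ++ u ++ u) : ∃ r : List α, r.length = u.length ∧ w = r ++ r := by
  obtain ⟨a, b, hab⟩ := hinf
  have hk : a.length ≤ u.length := by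
    have := congrArg length hab
    simp only [length_append] at this
    omega
  set t := u.take a.length
  set d := u.drop a.length
  have hu : t ++ d = u := take_append_drop _ _
  have ht : t.length = a.length := length_take_of_le hk
  have ha : a = t := by
    have := congrArg (take a.length) hab
    rwa [append_assoc, take_left, append_assoc, take_append_of_le_length hk] at this
  rw [ha, ← hu] at hab
  have hwb : w ++ b = (d ++ t) ++ (d ++ t) ++ d := by
    refine append_cancel_left (as := t) ?_
    rw [← append_assoc, hab]
    simp only [append_assoc]
  have hl := congrArg length hu
  simp only [length_append] at hl hw
  refine ⟨d ++ t, by rw [length_append]; omega, ?_⟩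
  exact append_inj_left hwb (by simp only [length_append]; omega)

theorem eq_of_append_infix_cube {x y u : List α} (hx : x.length = u.length)
    (hy : y.length = u.length) (hinf : x ++ y <:+: u ++ u ++ u) : x = y := by
  obtain ⟨r, hr, hxy⟩ :=
    exists_eq_append_self_of_infix_cube (by rw [length_append, hx, hy, two_mul]) hinf
  have hxr : x.length = r.length := hx.trans hr.symm
  exact (append_inj_left hxy hxr).trans (append_inj_right hxy hxr).symm

end List

theorem not_factor_of_cube {α : Type} (u v : List α)
    (hlen : u.length = v.length) (h : u ++ v ≠ v ++ u) :
    ¬ (u ++ v) <:+: (u ++ u ++ u) ∧ ¬ (v ++ u) <:+: (u ++ u ++ u) ∧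
    ¬ (u ++ v) <:+: (v ++ v ++ v) ∧ ¬ (v ++ u) <:+: (v ++ v ++ v) := by
  have huv : u ≠ v := by
    rintro rfl
    exact h rfl
  exact ⟨fun hi => huv (List.eq_of_append_infix_cube rfl hlen.symm hi),
    fun hi => huv (List.eq_of_append_infix_cube hlen.symm rfl hi).symm,
    fun hi => huv (List.eq_of_append_infix_cube hlen rfl hi),
    fun hi => huv (List.eq_of_append_infix_cube rfl hlen hi).symm⟩
end

section
/- Let u, v be words of the same length with uv ≠ vu, and let h : {0,1,2}* → {u,v}* be the string homomorphism determined by h(0) = uv, h(1) = vu, h(2) = u^3 v^4. Then neither u^4 nor v^4 occurs as a factor of h(w) for any w ∈ {0,1}*. -/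
lemma key_extract {α : Type} (P C S Q : List α) (h : P ++ C ++ S = Q) :
    C = (Q.drop P.length).take C.length := by
  subst h
  rw [List.append_assoc, List.drop_left, List.take_left]

lemma exists_block_infix {α : Type} (m : ℕ) (hm : 0 < m) :
    ∀ (L : List (List α)) (s : List α), (∀ B ∈ L, B.length = m) →
    s <:+: L.flatten → 2 * m ≤ s.length → ∃ B ∈ L, B <:+: s := by
  intro L
  induction L with
  | nil =>
    intro s _ hinf hlen
    obtain ⟨p, q, he⟩ := hinf
    simp only [List.flatten_nil] at he
    have := congrArg List.length he
    simp at this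
    obtain ⟨-, rfl, -⟩ := this
    simp at hlen
    omega
  | cons B L' ih =>
    intro s hall hinf hlen
    obtain ⟨pre, suf, he⟩ := hinf
    have hB : B.length = m := hall B (by simp)
    simp only [List.flatten_cons] at he
    by_cases hp : m ≤ pre.length
    · -- B is a prefix of pre; s is an infix of the rest
      have h1 : B <+: pre ++ s ++ suf := ⟨L'.flatten, by rw [he]⟩
      have h2 : pre <+: pre ++ s ++ suf := ⟨s ++ suf, by simp⟩
      have h3 : B <+: pre := List.prefix_of_prefix_length_le h1 h2 (by omega)
      obtain ⟨pre', rfl⟩ := h3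
      have he' : pre' ++ s ++ suf = L'.flatten := by
        have : B ++ (pre' ++ s ++ suf) = B ++ L'.flatten := by
          rw [← he]; simp
        simpa using this
      obtain ⟨C, hC, hCi⟩ := ih s (fun x hx => hall x (by simp [hx])) ⟨pre', suf, he'⟩ hlen
      exact ⟨C, by simp [hC], hCi⟩
    · push_neg at hp
      match L', hall, ih with
      | [], hall, ih =>
        have := congrArg List.length he
        simp at this; omega
      | B₁ :: L'', hall, ih =>
        have hB₁ : B₁.length = m := hall B₁ (by simp)
        have h1 : B ++ B₁ <+: pre ++ s ++ suf := by
          refine ⟨L''.flatten, ?_⟩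
          rw [he]; simp
        have h2 : pre ++ s <+: pre ++ s ++ suf := ⟨suf, by simp⟩
        have h3 : B ++ B₁ <+: pre ++ s :=
          List.prefix_of_prefix_length_le h1 h2 (by simp; omega)
        obtain ⟨r, hr⟩ := h3
        have hd := congrArg (List.drop pre.length) hr
        rw [List.drop_left] at hd
        rw [List.append_assoc, List.drop_append_of_le_length (by omega)] at hd
        exact ⟨B₁, by simp, ⟨B.drop pre.length, r, by rw [List.append_assoc]; exact hd⟩⟩

lemma block_in_pow4 {α : Type} (u B : List α)
    (hB : B.length = 2 * u.length)
    (hinf : B <:+: (u ++ u ++ u ++ u)) :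
    ∃ c : List α, c.length = u.length ∧ B = c ++ c := by
  obtain ⟨pre, suf, he⟩ := hinf
  set n := u.length with hn
  have hlen4 : pre.length + B.length + suf.length = 4 * n := by
    have := congrArg List.length he
    simp at this; omega
  have e1 : B = ((u ++ u ++ u ++ u).drop pre.length).take (2 * n) := by
    have := key_extract pre B suf _ he
    rwa [hB] at this
  by_cases hc : pre.length ≤ n
  · set x := u.take pre.length with hxd
    set y := u.drop pre.length with hyd
    have hxy : x ++ y = u := List.take_append_drop _ _
    have lx : x.length = pre.length := by simp [hxd]; omega
    have ly : y.length = n - pre.length := by simp [hyd]; omega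
    refine ⟨y ++ x, by simp [lx, ly]; omega, ?_⟩
    have he2 : x ++ ((y ++ x) ++ (y ++ x)) ++ (y ++ u) = u ++ u ++ u ++ u := by
      rw [← hxy]
      simp
    have e2 := key_extract x ((y ++ x) ++ (y ++ x)) (y ++ u) _ he2
    rw [lx] at e2
    have lc : ((y ++ x) ++ (y ++ x)).length = 2 * n := by simp [lx, ly]; omega
    rw [lc] at e2
    rw [e1, ← e2]
  · push_neg at hc
    set r := pre.length - n with hrd
    have hr : r ≤ n := by omega
    set x := u.take r with hxd
    set y := u.drop r with hyd
    have hxy : x ++ y = u := List.take_append_drop _ _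
    have lx : x.length = r := by simp [hxd]; omega
    have ly : y.length = n - r := by simp [hyd]; omega
    refine ⟨y ++ x, by simp [lx, ly]; omega, ?_⟩
    have he2 : (u ++ x) ++ ((y ++ x) ++ (y ++ x)) ++ y = u ++ u ++ u ++ u := by
      rw [← hxy]
      simp
    have e2 := key_extract (u ++ x) ((y ++ x) ++ (y ++ x)) y _ he2
    have lp : (u ++ x).length = pre.length := by simp [lx]; omega
    rw [lp] at e2
    have lc : ((y ++ x) ++ (y ++ x)).length = 2 * n := by simp [lx, ly]; omega
    rw [lc] at e2
    rw [e1, ← e2]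


/-- The letter map of the string homomorphism `h` determined by
`h(0) = uv`, `h(1) = vu`, `h(2) = u³v⁴`. -/
def hLetter {α : Type} (u v : List α) : Fin 3 → List α :=
  fun i =>
    if i = 0 then u ++ v
    else if i = 1 then v ++ u
    else u ++ u ++ u ++ v ++ v ++ v ++ v

/-- The string homomorphism determined by `hLetter`. -/
def hHom {α : Type} (u v : List α) (w : List (Fin 3)) : List α :=
  (w.map (hLetter u v)).flatten

theorem fourth_powers_not_factors {α : Type} (u v : List α)
    (hlen : u.length = v.length) (h : u ++ v ≠ v ++ u)
    (w : List (Fin 3)) (hw : (2 : Fin 3) ∉ w) :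
    ¬ (u ++ u ++ u ++ u) <:+: hHom u v w ∧ ¬ (v ++ v ++ v ++ v) <:+: hHom u v w := by
  set n := u.length with hn
  have hn0 : 0 < n := by
    rcases Nat.eq_zero_or_pos n with h0 | h0
    · exfalso
      have hu : u = [] := List.length_eq_zero_iff.mp (by omega)
      have hv : v = [] := List.length_eq_zero_iff.mp (by omega)
      exact h (by rw [hu, hv])
    · exact h0
  have hblocks : ∀ B ∈ w.map (hLetter u v), B.length = 2 * n := by
    intro B hBm
    obtain ⟨i, hi, rfl⟩ := List.mem_map.mp hBm
    have hi2 : i ≠ 2 := fun hh => hw (hh ▸ hi)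
    fin_cases i <;> simp_all [hLetter, hlen] <;> omega
  have hform : ∀ B ∈ w.map (hLetter u v), B = u ++ v ∨ B = v ++ u := by
    intro B hBm
    obtain ⟨i, hi, rfl⟩ := List.mem_map.mp hBm
    have hi2 : i ≠ 2 := fun hh => hw (hh ▸ hi)
    fin_cases i <;> simp_all [hLetter]
  have main : ∀ z : List α, z.length = n → ¬ (z ++ z ++ z ++ z) <:+: hHom u v w := by
    intro z hz hinf
    have hinf' : (z ++ z ++ z ++ z) <:+: (w.map (hLetter u v)).flatten := hinf
    obtain ⟨B, hBm, hBi⟩ := exists_block_infix (2 * n) (by omega) _ _ hblocks hinf'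
      (by simp [hz]; omega)
    obtain ⟨c, hc, hBc⟩ := block_in_pow4 z B (by rw [hblocks B hBm, hz]) hBi
    rw [hz] at hc
    rcases hform B hBm with hB | hB
    · rw [hB] at hBc
      have hu : u = c := List.append_inj_left hBc (by omega)
      have hv : v = c := List.append_inj_right hBc (by omega)
      exact h (by rw [hu, hv])
    · rw [hB] at hBc
      have hv : v = c := List.append_inj_left hBc (by omega)
      have hu : u = c := List.append_inj_right hBc (by omega)
      exact h (by rw [hu, hv])
  exact ⟨main u rfl, main v hlen.symm⟩
end

section
/- Let F be the finite field of order p^n (p prime). Every F_p-linear map φ : F_{p^n} → F_p is of the form φ(x) = Σ_{i=1}^{n} a_i x^{p^i} for some a_1, …, a_n ∈ F_{p^n}, and conversely every such expression with values in F_p defines an F_p-linear map. -/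
variable (p n : ℕ) [Fact p.Prime]

private noncomputable def frobLin (k : ℕ) : GaloisField p n →ₗ[ZMod p] GaloisField p n where
  toFun x := x ^ p ^ k
  map_add' x y := add_pow_char_pow x y p k
  map_smul' c x := by
    simp only [Algebra.smul_def, mul_pow, RingHom.id_apply]
    congr 1
    rw [← map_pow, ZMod.pow_card_pow]

private lemma numaux {i j : ℕ} (hp : p.Prime) (hij : i < j) (hj : j < n)
    (h : p ^ (i + 1) ≡ p ^ (j + 1) [MOD p ^ n - 1]) : False := by
  have hp1 : 1 < p := hp.one_lt
  have hle : p ^ (i + 1) ≤ p ^ (j + 1) := Nat.pow_le_pow_right hp.one_le (by omega)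
  have hdvd : (p ^ n - 1) ∣ p ^ (j + 1) - p ^ (i + 1) := (Nat.modEq_iff_dvd' hle).mp h
  have hfact : p ^ (j + 1) - p ^ (i + 1) = p ^ (i + 1) * (p ^ (j - i) - 1) := by
    rw [Nat.mul_sub, mul_one, ← pow_add]
    congr 2
    omega
  have hcop : Nat.Coprime (p ^ n - 1) (p ^ (i + 1)) := by
    apply Nat.Coprime.pow_right
    rw [Nat.coprime_comm]
    rw [hp.coprime_iff_not_dvd]
    intro hd
    have h1 : (1:ℕ) ≤ p ^ n := Nat.one_le_pow _ _ hp.pos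
    have h2 : p ∣ p ^ n := dvd_pow_self p (by omega)
    have : p ∣ 1 := by
      have := Nat.dvd_sub h2 hd
      rwa [Nat.sub_sub_self h1] at this
    have := Nat.le_of_dvd one_pos this
    omega
  have hdvd2 : (p ^ n - 1) ∣ p ^ (j - i) - 1 :=
    hcop.dvd_of_dvd_mul_left (hfact ▸ hdvd)
  have h1 : p ^ (j - i) - 1 ≠ 0 := by
    have : 1 < p ^ (j - i) := Nat.one_lt_pow (by omega) hp1
    omega
  have hle2 : p ^ n - 1 ≤ p ^ (j - i) - 1 := Nat.le_of_dvd (by omega) hdvd2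
  have : p ^ n ≤ p ^ (j - i) := by
    have : (1:ℕ) ≤ p ^ (j - i) := Nat.one_le_pow _ _ hp.pos
    have : (1:ℕ) ≤ p ^ n := Nat.one_le_pow _ _ hp.pos
    omega
  have := (Nat.pow_le_pow_iff_right hp1).mp this
  omega

private lemma frob_injective (hn : n ≠ 0) :
    Function.Injective
      (fun i : Fin n => (powMonoidHom (p ^ (i.val + 1)) : GaloisField p n →* GaloisField p n)) := by
  have hp := Fact.out (p := p.Prime)
  haveI : Finite (GaloisField p n) :=
    (Nat.card_pos_iff.mp (by rw [GaloisField.card p n hn]; exact Nat.pow_pos hp.pos)).2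
  haveI := Fintype.ofFinite (GaloisField p n)
  haveI : DecidableEq (GaloisField p n) := Classical.decEq _
  intro i j hij
  by_contra hne
  obtain ⟨g, hg⟩ := IsCyclic.exists_generator (α := (GaloisField p n)ˣ)
  have horder : orderOf g = p ^ n - 1 := by
    rw [orderOf_eq_card_of_forall_mem_zpowers hg, Nat.card_units, GaloisField.card p n hn]
  have hfun := DFunLike.congr_fun hij (g : GaloisField p n)
  simp only [powMonoidHom_apply] at hfun
  have hu : g ^ p ^ (i.val + 1) = g ^ p ^ (j.val + 1) := by
    apply Units.ext
    rwa [Units.val_pow_eq_pow_val, Units.val_pow_eq_pow_val]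
  have hmod := pow_eq_pow_iff_modEq.mp hu
  rw [horder] at hmod
  have hij' : i.val ≠ j.val := fun h => hne (Fin.ext h)
  rcases hij'.lt_or_gt with h | h
  · exact numaux p n hp h j.isLt hmod
  · exact numaux p n hp h i.isLt hmod.symm

private lemma frob_li (hn : n ≠ 0) :
    LinearIndependent (GaloisField p n) (fun i : Fin n => frobLin p n (i.val + 1)) := by
  apply LinearIndependent.of_comp
    (LinearMap.ltoFun (ZMod p) (GaloisField p n) (GaloisField p n) (GaloisField p n))
  have h := (linearIndependent_monoidHom (GaloisField p n) (GaloisField p n)).comp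
    _ (frob_injective p n hn)
  exact h

private lemma frob_span (hn : n ≠ 0) :
    Submodule.span (GaloisField p n)
      (Set.range (fun i : Fin n => frobLin p n (i.val + 1))) = ⊤ := by
  haveI : Nonempty (Fin n) := Fin.pos_iff_nonempty.mp (Nat.pos_of_ne_zero hn)
  apply (frob_li p n hn).span_eq_top_of_card_eq_finrank
  rw [Fintype.card_fin, Module.finrank_linearMap, GaloisField.finrank p hn,
    Module.finrank_self, mul_one]

open Finset in
theorem linear_maps_are_twisted_polynomials (p n : ℕ) [Fact p.Prime] (hn : n ≠ 0) :
    (∀ φ : GaloisField p n →ₗ[ZMod p] ZMod p,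
      ∃ a : Fin n → GaloisField p n,
        ∀ x : GaloisField p n,
          algebraMap (ZMod p) (GaloisField p n) (φ x) =
            ∑ i : Fin n, a i * x ^ p ^ (i.val + 1)) ∧
    (∀ a : Fin n → GaloisField p n,
      (∀ x : GaloisField p n,
        (∑ i : Fin n, a i * x ^ p ^ (i.val + 1)) ∈
          Set.range (algebraMap (ZMod p) (GaloisField p n))) →
      ∃ ψ : GaloisField p n →ₗ[ZMod p] GaloisField p n,
        ∀ x : GaloisField p n, ψ x = ∑ i : Fin n, a i * x ^ p ^ (i.val + 1)) := by
  constructor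
  · intro φ
    set L := (Algebra.linearMap (ZMod p) (GaloisField p n)).comp φ with hL
    have hmem : L ∈ Submodule.span (GaloisField p n)
        (Set.range (fun i : Fin n => frobLin p n (i.val + 1))) := by
      rw [frob_span p n hn]; trivial
    obtain ⟨a, ha⟩ := (Submodule.mem_span_range_iff_exists_fun _).mp hmem
    refine ⟨a, fun x => ?_⟩
    have := DFunLike.congr_fun ha x
    simp only [LinearMap.coe_sum, Finset.sum_apply, LinearMap.smul_apply,
      smul_eq_mul, hL, LinearMap.comp_apply, Algebra.linearMap_apply] at this
    rw [← this]
    rfl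
  · intro a _
    refine ⟨∑ i : Fin n, a i • frobLin p n (i.val + 1), fun x => ?_⟩
    simp only [LinearMap.coe_sum, Finset.sum_apply, LinearMap.smul_apply, smul_eq_mul]
    rfl
end
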